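/- arXiv:2105.13922 — 10 statements merged into one kernel-verified Lean document; each statement's English description precedes it below -/
import Mathlib

section
/- Let f : ℝ^m × ℝ^n → ℝ^m and g : ℝ^m × ℝ^n → ℝ^n be three-times continuously differentiable with bounded derivatives, let α, λ > 0, and fix an initial point (φ₀, θ₀). For h > 0 define the discrete simultaneous Euler step φ₁ = φ₀ + αh·f(φ₀, θ₀), θ₁ = θ₀ + λh·g(φ₀, θ₀), and let (φ̃(s), θ̃(s)) be the solution with initial condition (φ₀, θ₀) of the modified system dφ/ds = f − (αh/2)(f·∇_φ f + g·∇_θ f), dθ/ds = g − (λh/2)(f·∇_φ g + g·∇_θ g). Then there exist constants C > 0 and h₀ > 0 such that for all 0 < h < h₀, ‖φ₁ − φ̃(αh)‖ ≤ C h³ and ‖θ₁ − θ̃(λh)‖ ≤ C h³. -/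
/-!
Write `z = (φ̃, θ̃)` for the joint modified flow and `W = (f, g)`. Along `z` one has
`z' = W(z) + O(h)`, so on `[0, t]`, `t = αh`, the curve is `z₀ + s W(z₀) + O(hs + s²)` and the
`φ`-component of the modified field equals `f(z₀) + (s - t/2) Df(z₀) W(z₀) + O(h²)`. The linear
term integrates to zero over `[0, t]`, so `φ̃(t) - φ₀ - t f(z₀) = O(h³)`; the same argument with
`g` and `t = λh` gives the bound for `θ`.
-/

open Set Filter

section Curves

variable {E : Type*} [NormedAddCommGroup E] [NormedSpace ℝ E]

theorem norm_sub_le_of_norm_deriv_le {u u' : ℝ → E} {t C : ℝ} (ht : 0 ≤ t)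
    (hu : ∀ s ∈ Icc 0 t, HasDerivAt u (u' s) s) (hC : ∀ s ∈ Icc 0 t, ‖u' s‖ ≤ C) :
    ‖u t - u 0‖ ≤ C * t := by
  simpa using norm_image_sub_le_of_norm_deriv_le_segment'
    (fun s hs => (hu s hs).hasDerivWithinAt) (fun s hs => hC s (Ico_subset_Icc_self hs))
    t ⟨ht, le_rfl⟩

theorem norm_sub_sub_smul_le_of_norm_deriv_sub_le {z z' : ℝ → E} {W : E → E} {t K M δ : ℝ}
    (ht : 0 ≤ t) (hK : 0 ≤ K) (hW : ∀ p q, ‖W q - W p‖ ≤ K * ‖q - p‖)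
    (hz : ∀ s, HasDerivAt z (z' s) s) (hM : ∀ s ∈ Icc 0 t, ‖z' s‖ ≤ M)
    (hδ : ∀ s ∈ Icc 0 t, ‖z' s - W (z s)‖ ≤ δ) :
    ‖z t - z 0 - t • W (z 0)‖ ≤ (δ + K * M * t) * t := by
  have hM0 : 0 ≤ M := (norm_nonneg _).trans (hM 0 ⟨le_rfl, ht⟩)
  have hderiv : ∀ s, HasDerivAt (fun s => z s - z 0 - s • W (z 0)) (z' s - W (z 0)) s :=
    fun s => ((hz s).sub_const _).sub (by simpa using (hasDerivAt_id s).smul_const (W (z 0)))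
  have hbound : ∀ s ∈ Icc 0 t, ‖z' s - W (z 0)‖ ≤ δ + K * M * t := by
    intro s hs
    have hzs : ‖z s - z 0‖ ≤ M * s := norm_sub_le_of_norm_deriv_le hs.1
      (fun r _ => hz r) (fun r hr => hM r ⟨hr.1, hr.2.trans hs.2⟩)
    calc ‖z' s - W (z 0)‖ ≤ ‖z' s - W (z s)‖ + ‖W (z s) - W (z 0)‖ :=
          norm_sub_le_norm_sub_add_norm_sub _ _ _
      _ ≤ δ + K * (M * s) := add_le_add (hδ s hs) ((hW _ _).trans (by gcongr))
      _ ≤ δ + K * M * t := by rw [← mul_assoc]; gcongr; exact hs.2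
  simpa using norm_sub_le_of_norm_deriv_le ht (fun s _ => hderiv s) hbound

end Curves

section BoundedC2

variable {E G : Type*} [NormedAddCommGroup E] [NormedSpace ℝ E]
  [NormedAddCommGroup G] [NormedSpace ℝ G]

structure BoundedC2With (K : ℝ) (F : E → G) : Prop where
  differentiable : Differentiable ℝ F
  differentiable_fderiv : Differentiable ℝ (fderiv ℝ F)
  norm_le : ∀ p, ‖F p‖ ≤ K
  norm_fderiv_le : ∀ p, ‖fderiv ℝ F p‖ ≤ K
  norm_fderiv_fderiv_le : ∀ p, ‖fderiv ℝ (fderiv ℝ F) p‖ ≤ K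

theorem ContDiff.eventually_boundedC2With {F : E → G} (hF : ContDiff ℝ 2 F)
    (hb : ∀ i : ℕ, i ≤ 2 → ∃ C : ℝ, ∀ p, ‖iteratedFDeriv ℝ i F p‖ ≤ C) :
    ∀ᶠ K in atTop, BoundedC2With K F := by
  obtain ⟨C₀, h₀⟩ := hb 0 (by norm_num)
  obtain ⟨C₁, h₁⟩ := hb 1 (by norm_num)
  obtain ⟨C₂, h₂⟩ := hb 2 (by norm_num)
  filter_upwards [eventually_ge_atTop (max C₀ (max C₁ C₂))] with K hK
  refine ⟨hF.differentiable (by norm_num),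
    (hF.fderiv_right (m := 1) (by norm_num)).differentiable (by norm_num),
    fun p => ?_, fun p => ?_, fun p => ?_⟩
  · rw [← norm_iteratedFDeriv_zero (𝕜 := ℝ)]
    exact (h₀ p).trans ((le_max_left _ _).trans hK)
  · rw [← norm_iteratedFDeriv_zero (𝕜 := ℝ), norm_iteratedFDeriv_fderiv]
    exact (h₁ p).trans ((le_max_left _ _).trans ((le_max_right _ _).trans hK))
  · rw [← norm_iteratedFDeriv_zero (𝕜 := ℝ) (f := fderiv ℝ (fderiv ℝ F)),
      norm_iteratedFDeriv_fderiv, norm_iteratedFDeriv_fderiv]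
    exact (h₂ p).trans ((le_max_right _ _).trans ((le_max_right _ _).trans hK))

namespace BoundedC2With

variable {K : ℝ} {F : E → G}

theorem nonneg (hF : BoundedC2With K F) : 0 ≤ K :=
  (norm_nonneg _).trans (hF.norm_le 0)

theorem norm_sub_le (hF : BoundedC2With K F) (p q : E) : ‖F q - F p‖ ≤ K * ‖q - p‖ :=
  convex_univ.norm_image_sub_le_of_norm_fderiv_le (fun z _ => hF.differentiable z)
    (fun z _ => hF.norm_fderiv_le z) trivial trivial

theorem norm_fderiv_sub_le (hF : BoundedC2With K F) (p q : E) :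
    ‖fderiv ℝ F q - fderiv ℝ F p‖ ≤ K * ‖q - p‖ :=
  convex_univ.norm_image_sub_le_of_norm_fderiv_le (fun z _ => hF.differentiable_fderiv z)
    (fun z _ => hF.norm_fderiv_fderiv_le z) trivial trivial

theorem norm_sub_sub_fderiv_le (hF : BoundedC2With K F) (p q : E) :
    ‖F q - F p - fderiv ℝ F p (q - p)‖ ≤ K * ‖q - p‖ ^ 2 := by
  rw [sq, ← mul_assoc]
  exact (convex_closedBall p ‖q - p‖).norm_image_sub_le_of_norm_fderiv_le'
    (fun z _ => hF.differentiable z)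
    (fun z hz => (hF.norm_fderiv_sub_le p z).trans
      (mul_le_mul_of_nonneg_left (mem_closedBall_iff_norm.1 hz) hF.nonneg))
    (Metric.mem_closedBall_self (norm_nonneg _)) (mem_closedBall_iff_norm.2 le_rfl)

theorem norm_fderiv_apply_sub_le (hF : BoundedC2With K F) {W : E → E}
    (hW : ∀ p, ‖W p‖ ≤ K) (hW' : ∀ p q, ‖W q - W p‖ ≤ K * ‖q - p‖) (p q : E) :
    ‖fderiv ℝ F q (W q) - fderiv ℝ F p (W p)‖ ≤ 2 * K ^ 2 * ‖q - p‖ := by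
  have hsplit : fderiv ℝ F q (W q) - fderiv ℝ F p (W p) =
      (fderiv ℝ F q - fderiv ℝ F p) (W q) + fderiv ℝ F p (W q - W p) := by
    simp only [sub_apply, map_sub]; abel
  rw [hsplit]
  calc _ ≤ K * ‖q - p‖ * K + K * (K * ‖q - p‖) :=
        (norm_add_le _ _).trans (add_le_add
          (((fderiv ℝ F q - fderiv ℝ F p).le_opNorm _).trans
            (mul_le_mul (hF.norm_fderiv_sub_le p q) (hW q) (norm_nonneg _)
              (mul_nonneg hF.nonneg (norm_nonneg _))))
          (((fderiv ℝ F p).le_opNorm _).trans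
            (mul_le_mul (hF.norm_fderiv_le p) (hW' p q) (norm_nonneg _) hF.nonneg)))
    _ = 2 * K ^ 2 * ‖q - p‖ := by ring

theorem norm_modifiedRate_sub_linear_le (hF : BoundedC2With K F)
    {W : E → E} (hW : ∀ p, ‖W p‖ ≤ K) (hW' : ∀ p q, ‖W q - W p‖ ≤ K * ‖q - p‖)
    {z z' : ℝ → E} {t δ s : ℝ} (hz : ∀ s, HasDerivAt z (z' s) s)
    (hδ : ∀ s ∈ Icc 0 t, ‖z' s - W (z s)‖ ≤ δ) (hs : s ∈ Icc 0 t) :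
    ‖F (z s) - (t / 2) • fderiv ℝ F (z s) (W (z s))
        - (F (z 0) - (t / 2) • fderiv ℝ F (z 0) (W (z 0))) - s • fderiv ℝ F (z 0) (W (z 0))‖ ≤
      (K * (K + δ) * (3 * K + δ) * t + K * δ) * t := by
  obtain ⟨hs0, hst⟩ := hs
  have ht : 0 ≤ t := hs0.trans hst
  have hK := hF.nonneg
  have hδ0 : 0 ≤ δ := (norm_nonneg _).trans (hδ 0 ⟨le_rfl, ht⟩)
  have hsub : ∀ r ∈ Icc 0 s, r ∈ Icc 0 t := fun r hr => ⟨hr.1, hr.2.trans hst⟩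
  have hz' : ∀ r ∈ Icc 0 s, ‖z' r‖ ≤ K + δ := fun r hr =>
    (norm_le_norm_add_norm_sub' _ (W (z r))).trans (add_le_add (hW _) (hδ r (hsub r hr)))
  have hzs : ‖z s - z 0‖ ≤ (K + δ) * s :=
    norm_sub_le_of_norm_deriv_le hs0 (fun r _ => hz r) hz'
  have hlin := norm_sub_sub_smul_le_of_norm_deriv_sub_le hs0 hK hW' hz hz'
    (fun r hr => hδ r (hsub r hr))
  set A := fderiv ℝ F (z 0) (W (z 0))
  have hsplit : F (z s) - (t / 2) • fderiv ℝ F (z s) (W (z s)) - (F (z 0) - (t / 2) • A) - s • A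
      = (F (z s) - F (z 0) - fderiv ℝ F (z 0) (z s - z 0))
        + fderiv ℝ F (z 0) (z s - z 0 - s • W (z 0))
        - (t / 2) • (fderiv ℝ F (z s) (W (z s)) - A) := by
    simp only [map_sub, map_smul, smul_sub, A]; abel
  rw [hsplit]
  calc _ ≤ K * ((K + δ) * s) ^ 2 + K * ((δ + K * (K + δ) * s) * s)
        + t / 2 * (2 * K ^ 2 * ((K + δ) * s)) := by
        refine norm_sub_le_of_le (norm_add_le_of_le ?_ ?_) ?_
        · exact (hF.norm_sub_sub_fderiv_le _ _).trans (by gcongr)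
        · exact ((fderiv ℝ F (z 0)).le_opNorm _).trans
            (mul_le_mul (hF.norm_fderiv_le _) hlin (norm_nonneg _) hK)
        · rw [norm_smul, Real.norm_of_nonneg (by positivity)]
          exact mul_le_mul_of_nonneg_left
            ((hF.norm_fderiv_apply_sub_le hW hW' _ _).trans (by gcongr)) (by positivity)
    _ = K * (K + δ) * ((K + δ) * s ^ 2 + K * (s * s + t * s)) + K * δ * s := by ring
    _ ≤ K * (K + δ) * ((K + δ) * t ^ 2 + K * (t * t + t * t)) + K * δ * t := by gcongr
    _ = _ := by ring

theorem norm_eulerStep_sub_le (hF : BoundedC2With K F)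
    {W : E → E} (hW : ∀ p, ‖W p‖ ≤ K) (hW' : ∀ p q, ‖W q - W p‖ ≤ K * ‖q - p‖)
    {z z' : ℝ → E} {u : ℝ → G} {t δ : ℝ} (ht : 0 ≤ t)
    (hz : ∀ s, HasDerivAt z (z' s) s) (hδ : ∀ s ∈ Icc 0 t, ‖z' s - W (z s)‖ ≤ δ)
    (hu : ∀ s, HasDerivAt u (F (z s) - (t / 2) • fderiv ℝ F (z s) (W (z s))) s) :
    ‖u 0 + t • F (z 0) - u t‖ ≤ (K * (K + δ) * (3 * K + δ) * t + K * δ) * t ^ 2 := by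
  set A := fderiv ℝ F (z 0) (W (z 0))
  set w : ℝ → G := fun s => u s - s • (F (z 0) - (t / 2) • A) - (s ^ 2 / 2) • A
  have hw : ∀ s, HasDerivAt w
      (F (z s) - (t / 2) • fderiv ℝ F (z s) (W (z s)) - (F (z 0) - (t / 2) • A) - s • A) s := by
    intro s
    have hsq : HasDerivAt (fun s : ℝ => (s ^ 2 / 2) • A) (s • A) s := by
      simpa using ((hasDerivAt_pow 2 s).div_const 2).smul_const A
    exact ((hu s).sub (by simpa using (hasDerivAt_id s).smul_const _)).sub hsq
  have hwt := norm_sub_le_of_norm_deriv_le ht (fun s _ => hw s)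
    (fun s hs => hF.norm_modifiedRate_sub_linear_le hW hW' hz hδ hs)
  -- the `t / 2` correction and the Taylor term `(s ^ 2 / 2) • A` cancel at `s = t`
  have hstep : u 0 + t • F (z 0) - u t = -(w t - w 0) := by
    simp only [w]; module
  rw [hstep, norm_neg]
  exact hwt.trans_eq (by ring)

end BoundedC2With

end BoundedC2

section Game

variable {E₁ E₂ G : Type*} [NormedAddCommGroup E₁] [NormedSpace ℝ E₁]
  [NormedAddCommGroup E₂] [NormedSpace ℝ E₂] [NormedAddCommGroup G] [NormedSpace ℝ G]
  {K : ℝ} {f : E₁ × E₂ → E₁} {g : E₁ × E₂ → E₂}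

-- `fderiv ℝ f p (f p, g p)` is the paper's `f·∇_φ f + g·∇_θ f`.
noncomputable def modifiedField (f : E₁ × E₂ → E₁) (g : E₁ × E₂ → E₂) (a b : ℝ) (p : E₁ × E₂) :
    E₁ × E₂ :=
  (f p - (a / 2) • fderiv ℝ f p (f p, g p), g p - (b / 2) • fderiv ℝ g p (f p, g p))

theorem BoundedC2With.norm_prodMk_le (hf : BoundedC2With K f) (hg : BoundedC2With K g)
    (p : E₁ × E₂) : ‖(f p, g p)‖ ≤ K :=
  norm_prod_le_iff.2 ⟨hf.norm_le p, hg.norm_le p⟩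

theorem BoundedC2With.norm_smul_fderiv_prodMk_le {F : E₁ × E₂ → G} (hF : BoundedC2With K F)
    (hf : BoundedC2With K f) (hg : BoundedC2With K g) {a : ℝ} (ha : 0 ≤ a) (p : E₁ × E₂) :
    ‖(a / 2) • fderiv ℝ F p (f p, g p)‖ ≤ a / 2 * K ^ 2 := by
  rw [norm_smul_of_nonneg (by positivity), sq]
  gcongr
  exact ((fderiv ℝ F p).le_opNorm _).trans
    (mul_le_mul (hF.norm_fderiv_le p) (hf.norm_prodMk_le hg p) (norm_nonneg _) hF.nonneg)

theorem norm_modifiedField_sub_le (hf : BoundedC2With K f) (hg : BoundedC2With K g)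
    {a b : ℝ} (ha : 0 ≤ a) (hb : 0 ≤ b) (p : E₁ × E₂) :
    ‖modifiedField f g a b p - (f p, g p)‖ ≤ (a + b) / 2 * K ^ 2 := by
  refine norm_prod_le_iff.2 ⟨?_, ?_⟩
  · simpa only [modifiedField, Prod.fst_sub, sub_sub_cancel_left, norm_neg] using
      (hf.norm_smul_fderiv_prodMk_le hf hg ha p).trans (by gcongr; linarith)
  · simpa only [modifiedField, Prod.snd_sub, sub_sub_cancel_left, norm_neg] using
      (hg.norm_smul_fderiv_prodMk_le hf hg hb p).trans (by gcongr; linarith)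

theorem BoundedC2With.exists_norm_eulerStep_sub_le_mul_pow_three {F : E₁ × E₂ → G}
    (hF : BoundedC2With K F) (hf : BoundedC2With K f) (hg : BoundedC2With K g) {α lam a : ℝ}
    (hα : 0 ≤ α) (hlam : 0 ≤ lam) (ha : 0 ≤ a) :
    ∃ C, ∀ h, 0 ≤ h → h ≤ 1 → ∀ (z : ℝ → E₁ × E₂) (u : ℝ → G),
      (∀ s, HasDerivAt z (modifiedField f g (α * h) (lam * h) (z s)) s) →
      (∀ s, HasDerivAt u (F (z s) - (a * h / 2) • fderiv ℝ F (z s) (f (z s), g (z s))) s) →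
      ‖u 0 + (a * h) • F (z 0) - u (a * h)‖ ≤ C * h ^ 3 := by
  have hK := hF.nonneg
  set c := (α + lam) / 2 * K ^ 2
  refine ⟨(K * (K + c) * (3 * K + c) * a + K * c) * a ^ 2, fun h hh hh1 z u hz hu => ?_⟩
  have hW' : ∀ p q, ‖(f q, g q) - (f p, g p)‖ ≤ K * ‖q - p‖ := fun p q =>
    norm_prod_le_iff.2 ⟨hf.norm_sub_le p q, hg.norm_sub_le p q⟩
  have hδ : ∀ s, ‖modifiedField f g (α * h) (lam * h) (z s) - (f (z s), g (z s))‖ ≤ c * h :=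
    fun s => (norm_modifiedField_sub_le hf hg (by positivity) (by positivity) _).trans_eq
      (by ring)
  have hch : c * h ≤ c := mul_le_of_le_one_right (by positivity) hh1
  calc _ ≤ (K * (K + c * h) * (3 * K + c * h) * (a * h) + K * (c * h)) * (a * h) ^ 2 :=
        hF.norm_eulerStep_sub_le (hf.norm_prodMk_le hg) hW' (by positivity) hz
          (fun s _ => hδ s) hu
    _ = (K * (K + c * h) * (3 * K + c * h) * a + K * c) * a ^ 2 * h ^ 3 := by ring
    _ ≤ _ := by gcongr

end Game

/-- **Theorem 3.1 (simultaneous Euler updates).**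
The discrete simultaneous Euler updates with learning rates `α h` and `λ h` follow the
modified continuous system
`dφ/ds = f − (αh/2)(f·∇_φ f + g·∇_θ f)`, `dθ/ds = g − (λh/2)(f·∇_φ g + g·∇_θ g)`
with an error of size `O(h³)` after one update step. -/
theorem simultaneous_euler_modified_flow {m n : ℕ}
    (f : EuclideanSpace ℝ (Fin m) × EuclideanSpace ℝ (Fin n) → EuclideanSpace ℝ (Fin m))
    (g : EuclideanSpace ℝ (Fin m) × EuclideanSpace ℝ (Fin n) → EuclideanSpace ℝ (Fin n))
    (hf : ContDiff ℝ 3 f) (hg : ContDiff ℝ 3 g)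
    (hfb : ∀ i : ℕ, i ≤ 3 → ∃ C : ℝ, ∀ z, ‖iteratedFDeriv ℝ i f z‖ ≤ C)
    (hgb : ∀ i : ℕ, i ≤ 3 → ∃ C : ℝ, ∀ z, ‖iteratedFDeriv ℝ i g z‖ ≤ C)
    (α lam : ℝ) (hα : 0 < α) (hlam : 0 < lam)
    (φ0 : EuclideanSpace ℝ (Fin m)) (θ0 : EuclideanSpace ℝ (Fin n))
    -- the solution `s ↦ (φs h s, θs h s)` of the modified continuous system, for step size `h`
    (φs : ℝ → ℝ → EuclideanSpace ℝ (Fin m))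
    (θs : ℝ → ℝ → EuclideanSpace ℝ (Fin n))
    (hinitφ : ∀ h : ℝ, 0 < h → φs h 0 = φ0)
    (hinitθ : ∀ h : ℝ, 0 < h → θs h 0 = θ0)
    (hodeφ : ∀ h : ℝ, 0 < h → ∀ s : ℝ,
      HasDerivAt (φs h)
        (f (φs h s, θs h s) -
          (α * h / 2) • fderiv ℝ f (φs h s, θs h s) (f (φs h s, θs h s), g (φs h s, θs h s))) s)
    (hodeθ : ∀ h : ℝ, 0 < h → ∀ s : ℝ,
      HasDerivAt (θs h)
        (g (φs h s, θs h s) -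
          (lam * h / 2) • fderiv ℝ g (φs h s, θs h s) (f (φs h s, θs h s), g (φs h s, θs h s))) s) :
    ∃ C > (0 : ℝ), ∃ h0 > (0 : ℝ), ∀ h : ℝ, 0 < h → h < h0 →
      ‖(φ0 + (α * h) • f (φ0, θ0)) - φs h (α * h)‖ ≤ C * h ^ 3 ∧
      ‖(θ0 + (lam * h) • g (φ0, θ0)) - θs h (lam * h)‖ ≤ C * h ^ 3 := by
  obtain ⟨K, hfK, hgK⟩ := ((hf.of_le (by norm_num)).eventually_boundedC2With
    fun i hi => hfb i (by omega)).and ((hg.of_le (by norm_num)).eventually_boundedC2With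
    fun i hi => hgb i (by omega)) |>.exists
  obtain ⟨Cφ, hCφ⟩ := hfK.exists_norm_eulerStep_sub_le_mul_pow_three hfK hgK hα.le hlam.le hα.le
  obtain ⟨Cθ, hCθ⟩ := hgK.exists_norm_eulerStep_sub_le_mul_pow_three hfK hgK hα.le hlam.le hlam.le
  refine ⟨max (max Cφ Cθ) 1, by positivity, 1, one_pos, fun h hh hh1 => ?_⟩
  have hz : ∀ s, HasDerivAt (fun s => (φs h s, θs h s))
      (modifiedField f g (α * h) (lam * h) (φs h s, θs h s)) s :=
    fun s => (hodeφ h hh s).prodMk (hodeθ h hh s)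
  have hφ := hCφ h hh.le hh1.le _ _ hz (hodeφ h hh)
  have hθ := hCθ h hh.le hh1.le _ _ hz (hodeθ h hh)
  simp only [hinitφ h hh, hinitθ h hh] at hφ hθ
  exact ⟨hφ.trans (by gcongr; exact (le_max_left _ _).trans (le_max_left _ _)),
    hθ.trans (by gcongr; exact (le_max_right _ _).trans (le_max_left _ _))⟩
end

section
/- Let E : ℝ^m × ℝ^n → ℝ be twice continuously differentiable and set f = −∇_φ E, g = −∇_θ E (a common-payoff game). Then the first-order drift corrections of alternating gradient descent with m and k sub-steps per player are gradients of modified losses: −(1/2)((1/m)·f·∇_φ f + g·∇_θ f) = −∇_φ ( (1/(4m))‖∇_φ E‖² + (1/4)‖∇_θ E‖² ) and −(1/2)((1 − 2α/λ)·f·∇_φ g + (1/k)·g·∇_θ g) = −∇_θ ( (1/4)(1 − 2α/λ)‖∇_φ E‖² + (1/(4k))‖∇_θ E‖² ). Consequently the modified system of Theorem 3.2 is the gradient flow dφ/ds = −∇_φ L̃₁, dθ/ds = −∇_θ L̃₂ with L̃₁ = E + (αh/4)((1/m)‖∇_φ E‖² + ‖∇_θ E‖²) and L̃₂ = E + (λh/4)((1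 − 2α/λ)‖∇_φ E‖² + (1/k)‖∇_θ E‖²). -/
/-!
The drift corrections are Hessian-vector products. For `P, Q ∈ {φ, θ}`, the derivative of
`‖∇_Q E‖²` in a `P`-direction `u` is `2 D²E[u, ∇_Q E]`; by the symmetry of the second derivative
of a `C²` function this equals `2 D²E[∇_Q E, u] = 2 ⟪D(∇_P E)[∇_Q E], u⟫`. Hence
`∇_P ‖∇_Q E‖² = 2 (∇_Q E · ∇_Q) ∇_P E` for all four blocks, and both drift identities follow by
linearity of the partial gradients; adding `f = -∇_φ E`, `g = -∇_θ E` gives the gradient flows.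
-/

noncomputable section

/-- Gradient with respect to the first player's parameters `φ`. -/
def gradPhi {m n : ℕ}
    (E : EuclideanSpace ℝ (Fin m) × EuclideanSpace ℝ (Fin n) → ℝ)
    (z : EuclideanSpace ℝ (Fin m) × EuclideanSpace ℝ (Fin n)) : EuclideanSpace ℝ (Fin m) :=
  gradient (fun φ => E (φ, z.2)) z.1

/-- Gradient with respect to the second player's parameters `θ`. -/
def gradTheta {m n : ℕ}
    (E : EuclideanSpace ℝ (Fin m) × EuclideanSpace ℝ (Fin n) → ℝ)
    (z : EuclideanSpace ℝ (Fin m) × EuclideanSpace ℝ (Fin n)) : EuclideanSpace ℝ (Fin n) :=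
  gradient (fun θ => E (z.1, θ)) z.2

open ContinuousLinearMap InnerProductSpace
open scoped RealInnerProductSpace

section GradAlong

variable {Z X Y : Type*} [NormedAddCommGroup Z] [NormedSpace ℝ Z]
  [NormedAddCommGroup X] [InnerProductSpace ℝ X] [CompleteSpace X]
  [NormedAddCommGroup Y] [InnerProductSpace ℝ Y] [CompleteSpace Y]

def gradAlong (P : X →L[ℝ] Z) : StrongDual ℝ Z →L[ℝ] X :=
  (toDual ℝ X).symm.toContinuousLinearEquiv.toContinuousLinearMap ∘L
    (compL ℝ X Z ℝ).flip P

theorem inner_gradAlong (P : X →L[ℝ] Z) (l : StrongDual ℝ Z) (u : X) :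
    ⟪gradAlong P l, u⟫ = l (P u) := by
  simp [gradAlong, toDual_symm_apply]

theorem gradient_comp_eq_gradAlong {s : Z → ℝ} {ι : X → Z} {P : X →L[ℝ] Z} {x : X}
    (hs : DifferentiableAt ℝ s (ι x)) (hι : HasFDerivAt ι P x) :
    gradient (s ∘ ι) x = gradAlong P (fderiv ℝ s (ι x)) :=
  ext_inner_right ℝ fun u => by
    rw [inner_gradient_left, (hs.hasFDerivAt.comp x hι).fderiv, inner_gradAlong]
    rfl

theorem gradAlong_fderiv_norm_sq_gradAlong {E : Z → ℝ} {z : Z} (hE : ContDiffAt ℝ 2 E z)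
    (P : X →L[ℝ] Z) (Q : Y →L[ℝ] Z) :
    gradAlong P (fderiv ℝ (fun w => ‖gradAlong Q (fderiv ℝ E w)‖ ^ 2) z) =
      (2 : ℝ) • fderiv ℝ (fun w => gradAlong P (fderiv ℝ E w)) z
        (Q (gradAlong Q (fderiv ℝ E z))) := by
  have hD : HasFDerivAt (fderiv ℝ E) (fderiv ℝ (fderiv ℝ E) z) z :=
    ((hE.fderiv_right one_add_one_eq_two.le).differentiableAt one_ne_zero).hasFDerivAt
  have hP : HasFDerivAt (fun w => gradAlong P (fderiv ℝ E w))
      (gradAlong P ∘L fderiv ℝ (fderiv ℝ E) z) z := (gradAlong P).hasFDerivAt.comp z hD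
  have hQ : HasFDerivAt (fun w => gradAlong Q (fderiv ℝ E w))
      (gradAlong Q ∘L fderiv ℝ (fderiv ℝ E) z) z := (gradAlong Q).hasFDerivAt.comp z hD
  have hsymm := hE.isSymmSndFDerivAt (by simp)
  rw [hQ.norm_sq.fderiv, hP.fderiv]
  refine ext_inner_right ℝ fun u => ?_
  rw [inner_gradAlong, real_inner_smul_left, comp_apply, inner_gradAlong]
  simp only [smul_apply, comp_apply, innerSL_apply_apply]
  rw [real_inner_comm, inner_gradAlong, hsymm, nsmul_eq_mul, Nat.cast_ofNat]

end GradAlong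

theorem map_neg_mk_zero {A B C F : Type*} [AddCommGroup A] [AddCommGroup B] [AddCommGroup C]
    [FunLike F (A × B) C] [AddMonoidHomClass F (A × B) C] (L : F) (x : A) :
    L (-x, 0) = -L (x, 0) := by
  rw [← map_neg, Prod.neg_mk, neg_zero]

theorem map_zero_mk_neg {A B C F : Type*} [AddCommGroup A] [AddCommGroup B] [AddCommGroup C]
    [FunLike F (A × B) C] [AddMonoidHomClass F (A × B) C] (L : F) (y : B) :
    L (0, -y) = -L (0, y) := by
  rw [← map_neg, Prod.neg_mk, neg_zero]

section Game

variable {m n : ℕ}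

local notation "𝔼" => EuclideanSpace ℝ (Fin m) × EuclideanSpace ℝ (Fin n)

theorem gradPhi_eq_gradAlong {s : 𝔼 → ℝ} {z : 𝔼} (hs : DifferentiableAt ℝ s z) :
    gradPhi s z = gradAlong (inl ℝ _ _) (fderiv ℝ s z) :=
  gradient_comp_eq_gradAlong (ι := fun φ => (φ, z.2)) hs (hasFDerivAt_prodMk_left z.1 z.2)

theorem gradTheta_eq_gradAlong {s : 𝔼 → ℝ} {z : 𝔼} (hs : DifferentiableAt ℝ s z) :
    gradTheta s z = gradAlong (inr ℝ _ _) (fderiv ℝ s z) :=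
  gradient_comp_eq_gradAlong (ι := fun θ => (z.1, θ)) hs (hasFDerivAt_prodMk_right z.1 z.2)

theorem gradPhi_add {s t : 𝔼 → ℝ} {z : 𝔼} (hs : DifferentiableAt ℝ s z)
    (ht : DifferentiableAt ℝ t z) :
    gradPhi (fun w => s w + t w) z = gradPhi s z + gradPhi t z := by
  rw [gradPhi_eq_gradAlong (hs.fun_add ht), gradPhi_eq_gradAlong hs, gradPhi_eq_gradAlong ht,
    fderiv_fun_add hs ht, map_add]

theorem gradTheta_add {s t : 𝔼 → ℝ} {z : 𝔼} (hs : DifferentiableAt ℝ s z)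
    (ht : DifferentiableAt ℝ t z) :
    gradTheta (fun w => s w + t w) z = gradTheta s z + gradTheta t z := by
  rw [gradTheta_eq_gradAlong (hs.fun_add ht), gradTheta_eq_gradAlong hs,
    gradTheta_eq_gradAlong ht, fderiv_fun_add hs ht, map_add]

theorem gradPhi_const_mul (c : ℝ) {s : 𝔼 → ℝ} {z : 𝔼} (hs : DifferentiableAt ℝ s z) :
    gradPhi (fun w => c * s w) z = c • gradPhi s z := by
  rw [gradPhi_eq_gradAlong (hs.const_mul c), gradPhi_eq_gradAlong hs, fderiv_const_mul hs,
    map_smul]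

theorem gradTheta_const_mul (c : ℝ) {s : 𝔼 → ℝ} {z : 𝔼} (hs : DifferentiableAt ℝ s z) :
    gradTheta (fun w => c * s w) z = c • gradTheta s z := by
  rw [gradTheta_eq_gradAlong (hs.const_mul c), gradTheta_eq_gradAlong hs, fderiv_const_mul hs,
    map_smul]

variable {E : EuclideanSpace ℝ (Fin m) × EuclideanSpace ℝ (Fin n) → ℝ}

theorem gradPhi_eq_comp (hE : Differentiable ℝ E) :
    gradPhi E = fun w => gradAlong (inl ℝ _ _) (fderiv ℝ E w) :=
  funext fun w => gradPhi_eq_gradAlong (hE w)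

theorem gradTheta_eq_comp (hE : Differentiable ℝ E) :
    gradTheta E = fun w => gradAlong (inr ℝ _ _) (fderiv ℝ E w) :=
  funext fun w => gradTheta_eq_gradAlong (hE w)

theorem differentiable_gradPhi (hE : ContDiff ℝ 2 E) : Differentiable ℝ (gradPhi E) := by
  rw [gradPhi_eq_comp (hE.differentiable two_ne_zero)]
  exact (gradAlong _).differentiable.comp
    ((hE.fderiv_right one_add_one_eq_two.le).differentiable one_ne_zero)

theorem differentiable_gradTheta (hE : ContDiff ℝ 2 E) : Differentiable ℝ (gradTheta E) := by
  rw [gradTheta_eq_comp (hE.differentiable two_ne_zero)]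
  exact (gradAlong _).differentiable.comp
    ((hE.fderiv_right one_add_one_eq_two.le).differentiable one_ne_zero)

theorem gradPhi_norm_sq_gradPhi (hE : ContDiff ℝ 2 E) (z : 𝔼) :
    gradPhi (fun w => ‖gradPhi E w‖ ^ 2) z =
      (2 : ℝ) • fderiv ℝ (gradPhi E) z (gradPhi E z, 0) := by
  rw [gradPhi_eq_gradAlong ((differentiable_gradPhi hE).norm_sq ℝ z),
    gradPhi_eq_comp (hE.differentiable two_ne_zero),
    gradAlong_fderiv_norm_sq_gradAlong hE.contDiffAt]
  rfl

theorem gradPhi_norm_sq_gradTheta (hE : ContDiff ℝ 2 E) (z : 𝔼) :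
    gradPhi (fun w => ‖gradTheta E w‖ ^ 2) z =
      (2 : ℝ) • fderiv ℝ (gradPhi E) z (0, gradTheta E z) := by
  rw [gradPhi_eq_gradAlong ((differentiable_gradTheta hE).norm_sq ℝ z),
    gradPhi_eq_comp (hE.differentiable two_ne_zero),
    gradTheta_eq_comp (hE.differentiable two_ne_zero),
    gradAlong_fderiv_norm_sq_gradAlong hE.contDiffAt]
  rfl

theorem gradTheta_norm_sq_gradPhi (hE : ContDiff ℝ 2 E) (z : 𝔼) :
    gradTheta (fun w => ‖gradPhi E w‖ ^ 2) z =
      (2 : ℝ) • fderiv ℝ (gradTheta E) z (gradPhi E z, 0) := by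
  rw [gradTheta_eq_gradAlong ((differentiable_gradPhi hE).norm_sq ℝ z),
    gradPhi_eq_comp (hE.differentiable two_ne_zero),
    gradTheta_eq_comp (hE.differentiable two_ne_zero),
    gradAlong_fderiv_norm_sq_gradAlong hE.contDiffAt]
  rfl

theorem gradTheta_norm_sq_gradTheta (hE : ContDiff ℝ 2 E) (z : 𝔼) :
    gradTheta (fun w => ‖gradTheta E w‖ ^ 2) z =
      (2 : ℝ) • fderiv ℝ (gradTheta E) z (0, gradTheta E z) := by
  rw [gradTheta_eq_gradAlong ((differentiable_gradTheta hE).norm_sq ℝ z),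
    gradTheta_eq_comp (hE.differentiable two_ne_zero),
    gradAlong_fderiv_norm_sq_gradAlong hE.contDiffAt]
  rfl

end Game

theorem common_payoff_alternating_modified_losses_general {m n : ℕ}
    (E : EuclideanSpace ℝ (Fin m) × EuclideanSpace ℝ (Fin n) → ℝ)
    (hE : ContDiff ℝ 2 E)
    (α lam h : ℝ)
    (msub ksub : ℕ)
    (f : EuclideanSpace ℝ (Fin m) × EuclideanSpace ℝ (Fin n) → EuclideanSpace ℝ (Fin m))
    (g : EuclideanSpace ℝ (Fin m) × EuclideanSpace ℝ (Fin n) → EuclideanSpace ℝ (Fin n))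
    (hfdef : f = fun z => -gradPhi E z) (hgdef : g = fun z => -gradTheta E z) :
    ∀ z : EuclideanSpace ℝ (Fin m) × EuclideanSpace ℝ (Fin n),
      -- drift correction of the first player is a gradient
      (-(1 / 2 : ℝ)) •
          ((1 / (msub : ℝ)) • fderiv ℝ f z (f z, 0) + fderiv ℝ f z (0, g z)) =
        -gradPhi (fun w =>
          (1 / (4 * (msub : ℝ))) * ‖gradPhi E w‖ ^ 2 + (1 / 4) * ‖gradTheta E w‖ ^ 2) z ∧
      -- drift correction of the second player is a gradient
      (-(1 / 2 : ℝ)) •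
          ((1 - 2 * α / lam) • fderiv ℝ g z (f z, 0) +
            (1 / (ksub : ℝ)) • fderiv ℝ g z (0, g z)) =
        -gradTheta (fun w =>
          (1 / 4) * (1 - 2 * α / lam) * ‖gradPhi E w‖ ^ 2 +
            (1 / (4 * (ksub : ℝ))) * ‖gradTheta E w‖ ^ 2) z ∧
      -- the modified system is the gradient flow of the modified losses
      f z - (α * h / 2) •
          ((1 / (msub : ℝ)) • fderiv ℝ f z (f z, 0) + fderiv ℝ f z (0, g z)) =
        -gradPhi (fun w =>
          E w + (α * h / 4) *
            ((1 / (msub : ℝ)) * ‖gradPhi E w‖ ^ 2 + ‖gradTheta E w‖ ^ 2)) z ∧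
      g z - (lam * h / 2) •
          ((1 - 2 * α / lam) • fderiv ℝ g z (f z, 0) +
            (1 / (ksub : ℝ)) • fderiv ℝ g z (0, g z)) =
        -gradTheta (fun w =>
          E w + (lam * h / 4) *
            ((1 - 2 * α / lam) * ‖gradPhi E w‖ ^ 2 +
              (1 / (ksub : ℝ)) * ‖gradTheta E w‖ ^ 2)) z := by
  subst hfdef hgdef
  intro z
  have hE₁ : Differentiable ℝ E := hE.differentiable two_ne_zero
  have hΦ : Differentiable ℝ fun w => ‖gradPhi E w‖ ^ 2 := (differentiable_gradPhi hE).norm_sq ℝ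
  have hΘ : Differentiable ℝ fun w => ‖gradTheta E w‖ ^ 2 :=
    (differentiable_gradTheta hE).norm_sq ℝ
  -- `apply_rules` discharges the differentiability side conditions from `hE₁`, `hΦ`, `hΘ`.
  simp (disch := apply_rules [DifferentiableAt.fun_add, DifferentiableAt.const_mul])
    only [gradPhi_add, gradTheta_add, gradPhi_const_mul, gradTheta_const_mul, fderiv_fun_neg,
      neg_apply, map_neg_mk_zero, map_zero_mk_neg, neg_neg]
  rw [gradPhi_norm_sq_gradPhi hE, gradPhi_norm_sq_gradTheta hE, gradTheta_norm_sq_gradPhi hE,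
    gradTheta_norm_sq_gradTheta hE]
  refine ⟨?_, ?_, ?_, ?_⟩ <;> module

/-- **Corollary 5.1 (common-payoff alternating gradient descent).**
In a common-payoff game (`f = −∇_φ E`, `g = −∇_θ E`), the first-order drift corrections of
alternating gradient descent are gradients of modified losses, and consequently the modified
system of Theorem 3.2 is the gradient flow of
`L̃₁ = E + (αh/4)((1/m)‖∇_φ E‖² + ‖∇_θ E‖²)` and
`L̃₂ = E + (λh/4)((1 − 2α/λ)‖∇_φ E‖² + (1/k)‖∇_θ E‖²)`. -/
theorem common_payoff_alternating_modified_losses {m n : ℕ}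
    (E : EuclideanSpace ℝ (Fin m) × EuclideanSpace ℝ (Fin n) → ℝ)
    (hE : ContDiff ℝ 2 E)
    (α lam h : ℝ) (hα : 0 < α) (hlam : 0 < lam) (hh : 0 < h)
    (msub ksub : ℕ) (hmsub : 0 < msub) (hksub : 0 < ksub)
    (f : EuclideanSpace ℝ (Fin m) × EuclideanSpace ℝ (Fin n) → EuclideanSpace ℝ (Fin m))
    (g : EuclideanSpace ℝ (Fin m) × EuclideanSpace ℝ (Fin n) → EuclideanSpace ℝ (Fin n))
    (hfdef : f = fun z => -gradPhi E z) (hgdef : g = fun z => -gradTheta E z) :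
    ∀ z : EuclideanSpace ℝ (Fin m) × EuclideanSpace ℝ (Fin n),
      -- drift correction of the first player is a gradient
      (-(1 / 2 : ℝ)) •
          ((1 / (msub : ℝ)) • fderiv ℝ f z (f z, 0) + fderiv ℝ f z (0, g z)) =
        -gradPhi (fun w =>
          (1 / (4 * (msub : ℝ))) * ‖gradPhi E w‖ ^ 2 + (1 / 4) * ‖gradTheta E w‖ ^ 2) z ∧
      -- drift correction of the second player is a gradient
      (-(1 / 2 : ℝ)) •
          ((1 - 2 * α / lam) • fderiv ℝ g z (f z, 0) +
            (1 / (ksub : ℝ)) • fderiv ℝ g z (0, g z)) =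
        -gradTheta (fun w =>
          (1 / 4) * (1 - 2 * α / lam) * ‖gradPhi E w‖ ^ 2 +
            (1 / (4 * (ksub : ℝ))) * ‖gradTheta E w‖ ^ 2) z ∧
      -- the modified system is the gradient flow of the modified losses
      f z - (α * h / 2) •
          ((1 / (msub : ℝ)) • fderiv ℝ f z (f z, 0) + fderiv ℝ f z (0, g z)) =
        -gradPhi (fun w =>
          E w + (α * h / 4) *
            ((1 / (msub : ℝ)) * ‖gradPhi E w‖ ^ 2 + ‖gradTheta E w‖ ^ 2)) z ∧
      g z - (lam * h / 2) •
          ((1 - 2 * α / lam) • fderiv ℝ g z (f z, 0) +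
            (1 / (ksub : ℝ)) • fderiv ℝ g z (0, g z)) =
        -gradTheta (fun w =>
          E w + (lam * h / 4) *
            ((1 - 2 * α / lam) * ‖gradPhi E w‖ ^ 2 +
              (1 / (ksub : ℝ)) * ‖gradTheta E w‖ ^ 2)) z :=
  common_payoff_alternating_modified_losses_general E hE α lam h msub ksub f g hfdef hgdef
end
end

section
/- Let E : ℝ^m × ℝ^n → ℝ be twice continuously differentiable and set f = ∇_φ E, g = −∇_θ E (a zero-sum game with losses L₁ = −E, L₂ = E). Then the first-order drift corrections of simultaneous gradient descent are gradients of modified losses: −(1/2)(f·∇_φ f + g·∇_θ f) = −∇_φ ( (1/4)‖∇_φ E‖² − (1/4)‖∇_θ E‖² ) and −(1/2)(f·∇_φ g + g·∇_θ g) = −∇_θ ( −(1/4)‖∇_φ E‖² + (1/4)‖∇_θ E‖² ). Consequently the modified system of Theorem 3.1 is the gradient flow dφ/ds = −∇_φ L̃₁, dθ/ds = −∇_θ L̃₂ with L̃₁ = −E + (αh/4)‖∇_φ E‖² − (αh/4)‖∇_θ E‖² and L̃₂ = E − (λh/4)‖∇_φ E‖² + (λh/4)‖∇_θ E‖². -/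
noncomputable section

/-!
The derivative of `‖∇_φ E‖²` in a direction `u` is `2 ⟪∇_φ E, D(∇_φ E) u⟫ = 2 D²E(u, (∇_φ E, 0))`.
For `u = (v, 0)`, symmetry of the second derivative of a `C²` function rewrites this as
`2 ⟪D(∇_φ E)(∇_φ E, 0), v⟫`, so `∇_φ ‖∇_φ E‖² = 2 D(∇_φ E)(∇_φ E, 0)`; likewise for the three
other pairs of blocks. Every loss in the theorem has the form `a E + b ‖∇_φ E‖² + c ‖∇_θ E‖²`,
so its partial gradients are explicit and the claimed identities reduce to linear algebra.
-/

open InnerProductSpace ContinuousLinearMap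
open scoped RealInnerProductSpace

section PartialRiesz

variable {X Y : Type*} [NormedAddCommGroup X] [NormedAddCommGroup Y]

def rieszInl [InnerProductSpace ℝ X] [CompleteSpace X] [NormedSpace ℝ Y] :
    (X × Y →L[ℝ] ℝ) →L[ℝ] X :=
  (toDual ℝ X).symm.toContinuousLinearEquiv.toContinuousLinearMap ∘L
    (compL ℝ X (X × Y) ℝ).flip (inl ℝ X Y)

def rieszInr [NormedSpace ℝ X] [InnerProductSpace ℝ Y] [CompleteSpace Y] :
    (X × Y →L[ℝ] ℝ) →L[ℝ] Y :=
  (toDual ℝ Y).symm.toContinuousLinearEquiv.toContinuousLinearMap ∘L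
    (compL ℝ Y (X × Y) ℝ).flip (inr ℝ X Y)

theorem inner_rieszInl [InnerProductSpace ℝ X] [CompleteSpace X] [NormedSpace ℝ Y]
    (ℓ : X × Y →L[ℝ] ℝ) (v : X) : ⟪rieszInl ℓ, v⟫ = ℓ (v, 0) := by
  simp [rieszInl, toDual_symm_apply]

theorem inner_rieszInr [NormedSpace ℝ X] [InnerProductSpace ℝ Y] [CompleteSpace Y]
    (ℓ : X × Y →L[ℝ] ℝ) (v : Y) : ⟪rieszInr ℓ, v⟫ = ℓ (0, v) := by
  simp [rieszInr, toDual_symm_apply]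

end PartialRiesz

section PartialGradients

variable {m n : ℕ} {E : EuclideanSpace ℝ (Fin m) × EuclideanSpace ℝ (Fin n) → ℝ}

theorem inner_gradPhi {z : EuclideanSpace ℝ (Fin m) × EuclideanSpace ℝ (Fin n)}
    (hE : DifferentiableAt ℝ E z) (v : EuclideanSpace ℝ (Fin m)) :
    ⟪gradPhi E z, v⟫ = fderiv ℝ E z (v, 0) := by
  have h : HasFDerivAt (fun φ => E (φ, z.2)) (fderiv ℝ E z ∘L inl ℝ _ _) z.1 :=
    hE.hasFDerivAt.comp z.1 (hasFDerivAt_prodMk_left z.1 z.2)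
  rw [gradPhi, gradient, h.fderiv, toDual_symm_apply]
  rfl

theorem inner_gradTheta {z : EuclideanSpace ℝ (Fin m) × EuclideanSpace ℝ (Fin n)}
    (hE : DifferentiableAt ℝ E z) (v : EuclideanSpace ℝ (Fin n)) :
    ⟪gradTheta E z, v⟫ = fderiv ℝ E z (0, v) := by
  have h : HasFDerivAt (fun θ => E (z.1, θ)) (fderiv ℝ E z ∘L inr ℝ _ _) z.2 :=
    hE.hasFDerivAt.comp z.2 (hasFDerivAt_prodMk_right z.1 z.2)
  rw [gradTheta, gradient, h.fderiv, toDual_symm_apply]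
  rfl

theorem gradPhi_eq_iff {z : EuclideanSpace ℝ (Fin m) × EuclideanSpace ℝ (Fin n)}
    (hE : DifferentiableAt ℝ E z) {x : EuclideanSpace ℝ (Fin m)} :
    gradPhi E z = x ↔ ∀ v, ⟪x, v⟫ = fderiv ℝ E z (v, 0) := by
  rw [ext_iff_inner_right ℝ]
  simp only [inner_gradPhi hE, eq_comm]

theorem gradTheta_eq_iff {z : EuclideanSpace ℝ (Fin m) × EuclideanSpace ℝ (Fin n)}
    (hE : DifferentiableAt ℝ E z) {y : EuclideanSpace ℝ (Fin n)} :
    gradTheta E z = y ↔ ∀ v, ⟪y, v⟫ = fderiv ℝ E z (0, v) := by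
  rw [ext_iff_inner_right ℝ]
  simp only [inner_gradTheta hE, eq_comm]

theorem hasFDerivAt_gradPhi (hE : ContDiff ℝ 2 E)
    (z : EuclideanSpace ℝ (Fin m) × EuclideanSpace ℝ (Fin n)) :
    HasFDerivAt (gradPhi E) (rieszInl ∘L fderiv ℝ (fderiv ℝ E) z) z := by
  have hgrad : gradPhi E = rieszInl ∘ fderiv ℝ E := funext fun w =>
    (gradPhi_eq_iff ((hE.differentiable (by norm_num)) w)).2 (inner_rieszInl _)
  rw [hgrad]
  exact rieszInl.hasFDerivAt.comp z
    (((hE.fderiv_right le_rfl).differentiable one_ne_zero) z).hasFDerivAt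

theorem hasFDerivAt_gradTheta (hE : ContDiff ℝ 2 E)
    (z : EuclideanSpace ℝ (Fin m) × EuclideanSpace ℝ (Fin n)) :
    HasFDerivAt (gradTheta E) (rieszInr ∘L fderiv ℝ (fderiv ℝ E) z) z := by
  have hgrad : gradTheta E = rieszInr ∘ fderiv ℝ E := funext fun w =>
    (gradTheta_eq_iff ((hE.differentiable (by norm_num)) w)).2 (inner_rieszInr _)
  rw [hgrad]
  exact rieszInr.hasFDerivAt.comp z
    (((hE.fderiv_right le_rfl).differentiable one_ne_zero) z).hasFDerivAt

theorem inner_fderiv_gradPhi (hE : ContDiff ℝ 2 E)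
    (z u : EuclideanSpace ℝ (Fin m) × EuclideanSpace ℝ (Fin n))    (v : EuclideanSpace ℝ (Fin m)) :
    ⟪fderiv ℝ (gradPhi E) z u, v⟫ = fderiv ℝ (fderiv ℝ E) z u (v, 0) := by
  rw [(hasFDerivAt_gradPhi hE z).fderiv]
  exact inner_rieszInl _ v

theorem inner_fderiv_gradTheta (hE : ContDiff ℝ 2 E)
    (z u : EuclideanSpace ℝ (Fin m) × EuclideanSpace ℝ (Fin n))    (v : EuclideanSpace ℝ (Fin n)) :
    ⟪fderiv ℝ (gradTheta E) z u, v⟫ = fderiv ℝ (fderiv ℝ E) z u (0, v) := by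
  rw [(hasFDerivAt_gradTheta hE z).fderiv]
  exact inner_rieszInr _ v

end PartialGradients

section ModifiedLosses

variable {m n : ℕ} {E L : EuclideanSpace ℝ (Fin m) × EuclideanSpace ℝ (Fin n) → ℝ} {a b c : ℝ}

theorem gradPhi_modifiedLoss (hE : ContDiff ℝ 2 E)
    (hL : ∀ w, L w = a * E w + b * ‖gradPhi E w‖ ^ 2 + c * ‖gradTheta E w‖ ^ 2)
    (z : EuclideanSpace ℝ (Fin m) × EuclideanSpace ℝ (Fin n)) :
    gradPhi L z = a • gradPhi E z + (2 * b) • fderiv ℝ (gradPhi E) z (gradPhi E z, 0)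
      + (2 * c) • fderiv ℝ (gradPhi E) z (0, gradTheta E z) := by
  have hE₁ : DifferentiableAt ℝ E z := hE.differentiable (by norm_num) z
  have hL' := (((hE₁.hasFDerivAt.const_mul a).add
    ((hasFDerivAt_gradPhi hE z).norm_sq.const_mul b)).add
    ((hasFDerivAt_gradTheta hE z).norm_sq.const_mul c)).congr_of_eventuallyEq (.of_forall hL)
  rw [gradPhi_eq_iff hL'.differentiableAt, hL'.fderiv]
  intro v
  have hsymm : IsSymmSndFDerivAt ℝ E z := hE.contDiffAt.isSymmSndFDerivAt (by simp)
  simp only [add_apply, smul_apply, comp_apply, innerSL_apply_apply, inner_add_left,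
    real_inner_smul_left, smul_eq_mul]
  rw [inner_gradPhi hE₁, inner_fderiv_gradPhi hE, inner_fderiv_gradPhi hE,
    real_inner_comm _ (gradPhi E z), real_inner_comm _ (gradTheta E z), inner_rieszInl,
    inner_rieszInr, hsymm (v, 0), hsymm (v, 0)]
  ring

theorem gradTheta_modifiedLoss (hE : ContDiff ℝ 2 E)
    (hL : ∀ w, L w = a * E w + b * ‖gradPhi E w‖ ^ 2 + c * ‖gradTheta E w‖ ^ 2)
    (z : EuclideanSpace ℝ (Fin m) × EuclideanSpace ℝ (Fin n)) :
    gradTheta L z = a • gradTheta E z + (2 * b) • fderiv ℝ (gradTheta E) z (gradPhi E z, 0)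
      + (2 * c) • fderiv ℝ (gradTheta E) z (0, gradTheta E z) := by
  have hE₁ : DifferentiableAt ℝ E z := hE.differentiable (by norm_num) z
  have hL' := (((hE₁.hasFDerivAt.const_mul a).add
    ((hasFDerivAt_gradPhi hE z).norm_sq.const_mul b)).add
    ((hasFDerivAt_gradTheta hE z).norm_sq.const_mul c)).congr_of_eventuallyEq (.of_forall hL)
  rw [gradTheta_eq_iff hL'.differentiableAt, hL'.fderiv]
  intro v
  have hsymm : IsSymmSndFDerivAt ℝ E z := hE.contDiffAt.isSymmSndFDerivAt (by simp)
  simp only [add_apply, smul_apply, comp_apply, innerSL_apply_apply, inner_add_left,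
    real_inner_smul_left, smul_eq_mul]
  rw [inner_gradTheta hE₁, inner_fderiv_gradTheta hE, inner_fderiv_gradTheta hE,
    real_inner_comm _ (gradPhi E z), real_inner_comm _ (gradTheta E z), inner_rieszInl,
    inner_rieszInr, hsymm (0, v), hsymm (0, v)]
  ring

end ModifiedLosses

theorem zero_sum_simultaneous_modified_losses_general {m n : ℕ}
    (E : EuclideanSpace ℝ (Fin m) × EuclideanSpace ℝ (Fin n) → ℝ)
    (hE : ContDiff ℝ 2 E)
    (α lam h : ℝ)
    (f : EuclideanSpace ℝ (Fin m) × EuclideanSpace ℝ (Fin n) → EuclideanSpace ℝ (Fin m))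
    (g : EuclideanSpace ℝ (Fin m) × EuclideanSpace ℝ (Fin n) → EuclideanSpace ℝ (Fin n))
    (hfdef : f = fun z => gradPhi E z) (hgdef : g = fun z => -gradTheta E z) :
    ∀ z : EuclideanSpace ℝ (Fin m) × EuclideanSpace ℝ (Fin n),
      -- drift correction of the first player is a gradient
      (-(1 / 2 : ℝ)) • (fderiv ℝ f z (f z, 0) + fderiv ℝ f z (0, g z)) =
        -gradPhi (fun w =>
          (1 / 4) * ‖gradPhi E w‖ ^ 2 - (1 / 4) * ‖gradTheta E w‖ ^ 2) z ∧
      -- drift correction of the second player is a gradient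
      (-(1 / 2 : ℝ)) • (fderiv ℝ g z (f z, 0) + fderiv ℝ g z (0, g z)) =
        -gradTheta (fun w =>
          -(1 / 4) * ‖gradPhi E w‖ ^ 2 + (1 / 4) * ‖gradTheta E w‖ ^ 2) z ∧
      -- the modified system is the gradient flow of the modified losses
      f z - (α * h / 2) • (fderiv ℝ f z (f z, 0) + fderiv ℝ f z (0, g z)) =
        -gradPhi (fun w =>
          -E w + (α * h / 4) * ‖gradPhi E w‖ ^ 2 - (α * h / 4) * ‖gradTheta E w‖ ^ 2) z ∧
      g z - (lam * h / 2) • (fderiv ℝ g z (f z, 0) + fderiv ℝ g z (0, g z)) =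
        -gradTheta (fun w =>
          E w - (lam * h / 4) * ‖gradPhi E w‖ ^ 2 + (lam * h / 4) * ‖gradTheta E w‖ ^ 2) z := by
  subst hfdef hgdef
  intro z
  have hg : fderiv ℝ (fun w => -gradTheta E w) z = -fderiv ℝ (gradTheta E) z := fderiv_neg
  have hG : ((0 : EuclideanSpace ℝ (Fin m)), -gradTheta E z) = -(0, gradTheta E z) := by simp
  refine ⟨?_, ?_, ?_, ?_⟩
  · rw [gradPhi_modifiedLoss hE (a := 0) (b := 1 / 4) (c := -(1 / 4)) (fun w => by ring),
      hG, map_neg]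
    module
  · rw [gradTheta_modifiedLoss hE (a := 0) (b := -(1 / 4)) (c := 1 / 4) (fun w => by ring),
      hg, hG]
    simp only [neg_apply, map_neg]
    module
  · rw [gradPhi_modifiedLoss hE (a := -1) (b := α * h / 4) (c := -(α * h / 4))
      (fun w => by ring), hG, map_neg]
    module
  · rw [gradTheta_modifiedLoss hE (a := 1) (b := -(lam * h / 4)) (c := lam * h / 4)
      (fun w => by ring), hg, hG]
    simp only [neg_apply, map_neg]
    module

/-- **Corollary 6.1 (zero-sum simultaneous gradient descent).**
In a zero-sum game (`f = ∇_φ E`, `g = −∇_θ E`), the first-order drift corrections of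
simultaneous gradient descent are gradients of modified losses, and consequently the
modified system of Theorem 3.1 is the gradient flow of
`L̃₁ = −E + (αh/4)‖∇_φ E‖² − (αh/4)‖∇_θ E‖²` and
`L̃₂ = E − (λh/4)‖∇_φ E‖² + (λh/4)‖∇_θ E‖²`. -/
theorem zero_sum_simultaneous_modified_losses {m n : ℕ}
    (E : EuclideanSpace ℝ (Fin m) × EuclideanSpace ℝ (Fin n) → ℝ)
    (hE : ContDiff ℝ 2 E)
    (α lam h : ℝ) (hα : 0 < α) (hlam : 0 < lam) (hh : 0 < h)
    (f : EuclideanSpace ℝ (Fin m) × EuclideanSpace ℝ (Fin n) → EuclideanSpace ℝ (Fin m))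
    (g : EuclideanSpace ℝ (Fin m) × EuclideanSpace ℝ (Fin n) → EuclideanSpace ℝ (Fin n))
    (hfdef : f = fun z => gradPhi E z) (hgdef : g = fun z => -gradTheta E z) :
    ∀ z : EuclideanSpace ℝ (Fin m) × EuclideanSpace ℝ (Fin n),
      -- drift correction of the first player is a gradient
      (-(1 / 2 : ℝ)) • (fderiv ℝ f z (f z, 0) + fderiv ℝ f z (0, g z)) =
        -gradPhi (fun w =>
          (1 / 4) * ‖gradPhi E w‖ ^ 2 - (1 / 4) * ‖gradTheta E w‖ ^ 2) z ∧
      -- drift correction of the second player is a gradient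
      (-(1 / 2 : ℝ)) • (fderiv ℝ g z (f z, 0) + fderiv ℝ g z (0, g z)) =
        -gradTheta (fun w =>
          -(1 / 4) * ‖gradPhi E w‖ ^ 2 + (1 / 4) * ‖gradTheta E w‖ ^ 2) z ∧
      -- the modified system is the gradient flow of the modified losses
      f z - (α * h / 2) • (fderiv ℝ f z (f z, 0) + fderiv ℝ f z (0, g z)) =
        -gradPhi (fun w =>
          -E w + (α * h / 4) * ‖gradPhi E w‖ ^ 2 - (α * h / 4) * ‖gradTheta E w‖ ^ 2) z ∧
      g z - (lam * h / 2) • (fderiv ℝ g z (f z, 0) + fderiv ℝ g z (0, g z)) =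
        -gradTheta (fun w =>
          E w - (lam * h / 4) * ‖gradPhi E w‖ ^ 2 + (lam * h / 4) * ‖gradTheta E w‖ ^ 2) z :=
  zero_sum_simultaneous_modified_losses_general E hE α lam h f g hfdef hgdef
end
end

section
/- Let f, f₁ : ℝ^m × ℝ^n → ℝ^m and g, g₁ : ℝ^m × ℝ^n → ℝ^n be twice continuously differentiable with bounded derivatives, let c > 0, and for τ > 0 let (φ(s), θ(s)) solve dφ/ds = f + τ·f₁, dθ/ds = g + cτ·g₁ with initial condition (φ₀, θ₀). Then as τ → 0⁺, φ(τ) = φ₀ + τ·f(φ₀, θ₀) + τ²·( f₁(φ₀, θ₀) + (1/2) f(φ₀, θ₀)·∇_φ f(φ₀, θ₀) + (1/2) g(φ₀, θ₀)·∇_θ f(φ₀, θ₀) ) + O(τ³), i.e. there exist C > 0 and τ₀ > 0 such that the difference between the two sides is at most C τ³ in norm for all 0 < τ < τ₀. -/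
/-!
Write `z = (φ, θ)`, `P = f + τ f₁` and `V = (f + τ f₁, g + cτ g₁)`, so that `z' = V(z)`,
`φ' = P(z)` and `φ'' = DP(z) V(z)`. For `τ ≤ min 1 c⁻¹`, `DP` and `V` are bounded and Lipschitz
uniformly in `τ`, hence so is `x ↦ DP(x) V(x)`, and `φ''(s)` stays within `O(s)` of `φ''(0)`.
Integrating twice bounds the error of the second-order Taylor polynomial of `φ` at `0` by `O(τ³)`.
At `z(0)`, `P = f + τ f₁` and `DP(V) = Df(f, g) + O(τ)`, which turns that polynomial into the
claimed one up to another `O(τ³)`.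
-/

open Set Filter

section

variable {α E E' F : Type*} [SeminormedAddCommGroup α] [NormedAddCommGroup E]
  [NormedAddCommGroup E'] [NormedAddCommGroup F]

def BoundedLipschitzWith (B : ℝ) (u : α → F) : Prop :=
  (∀ x, ‖u x‖ ≤ B) ∧ ∀ x y, ‖u x - u y‖ ≤ B * ‖x - y‖

variable {B M t : ℝ} {u w : α → F}

theorem BoundedLipschitzWith.prodMk {w : α → E} (hu : BoundedLipschitzWith B u)
    (hw : BoundedLipschitzWith B w) :
    BoundedLipschitzWith B (fun x => (u x, w x)) :=
  ⟨fun x => norm_prod_le_iff.2 ⟨hu.1 x, hw.1 x⟩,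
    fun x y => norm_prod_le_iff.2 ⟨hu.2 x y, hw.2 x y⟩⟩

variable [NormedSpace ℝ E] [NormedSpace ℝ E'] [NormedSpace ℝ F]

theorem BoundedLipschitzWith.add_smul (hu : BoundedLipschitzWith B u)
    (hw : BoundedLipschitzWith B w) (ht : |t| ≤ 1) :
    BoundedLipschitzWith (2 * B) (fun x => u x + t • w x) := by
  refine ⟨fun x => ?_, fun x y => ?_⟩
  · calc ‖u x + t • w x‖ ≤ ‖u x‖ + |t| * ‖w x‖ := by
          rw [← Real.norm_eq_abs, ← norm_smul]; exact norm_add_le _ _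
      _ ≤ B + B :=
          add_le_add (hu.1 x) (mul_le_of_le_one_left (norm_nonneg _) ht |>.trans (hw.1 x))
      _ = 2 * B := by ring
  · calc ‖u x + t • w x - (u y + t • w y)‖ = ‖(u x - u y) + t • (w x - w y)‖ := by
          rw [smul_sub]; abel_nf
      _ ≤ ‖u x - u y‖ + |t| * ‖w x - w y‖ := by
          rw [← Real.norm_eq_abs, ← norm_smul]; exact norm_add_le _ _
      _ ≤ B * ‖x - y‖ + B * ‖x - y‖ :=
          add_le_add (hu.2 x y) (mul_le_of_le_one_left (norm_nonneg _) ht |>.trans (hw.2 x y))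
      _ = 2 * B * ‖x - y‖ := by ring

theorem BoundedLipschitzWith.norm_apply_sub_apply_le {A : α → E →L[ℝ] F} {V : α → E}
    (hA : BoundedLipschitzWith B A) (hV : BoundedLipschitzWith M V) (x y : α) :
    ‖A x (V x) - A y (V y)‖ ≤ 2 * B * M * ‖x - y‖ := by
  have hB : 0 ≤ B := (norm_nonneg _).trans (hA.1 x)
  calc ‖A x (V x) - A y (V y)‖ = ‖(A x - A y) (V x) + A y (V x - V y)‖ := by
        simp only [sub_apply, map_sub]; abel_nf
    _ ≤ ‖A x - A y‖ * ‖V x‖ + ‖A y‖ * ‖V x - V y‖ :=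
        norm_add_le_of_le ((A x - A y).le_opNorm _) ((A y).le_opNorm _)
    _ ≤ B * ‖x - y‖ * M + B * (M * ‖x - y‖) :=
        add_le_add (mul_le_mul (hA.2 x y) (hV.1 x) (norm_nonneg _) (by positivity))
          (mul_le_mul (hA.1 y) (hV.2 x y) (norm_nonneg _) hB)
    _ = 2 * B * M * ‖x - y‖ := by ring

theorem BoundedLipschitzWith.of_fderiv {h : E → F} (hd : Differentiable ℝ h)
    (hh : ∀ x, ‖h x‖ ≤ B) (hD : ∀ x, ‖fderiv ℝ h x‖ ≤ B) : BoundedLipschitzWith B h :=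
  ⟨hh, fun x y => convex_univ.norm_image_sub_le_of_norm_fderiv_le (fun z _ => hd z)
    (fun z _ => hD z) (mem_univ y) (mem_univ x)⟩

theorem eventually_boundedLipschitzWith_fderiv {h : E → F} (hh : ContDiff ℝ 2 h)
    (hb : ∀ i : ℕ, i ≤ 2 → ∃ C : ℝ, ∀ z, ‖iteratedFDeriv ℝ i h z‖ ≤ C) :
    ∀ᶠ B in atTop, BoundedLipschitzWith B h ∧ BoundedLipschitzWith B (fderiv ℝ h) := by
  obtain ⟨C₀, hC₀⟩ := hb 0 (by norm_num)
  obtain ⟨C₁, hC₁⟩ := hb 1 (by norm_num)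
  obtain ⟨C₂, hC₂⟩ := hb 2 le_rfl
  filter_upwards [eventually_ge_atTop (max C₀ (max C₁ C₂))] with B hB
  obtain ⟨hB₀, hB₁, hB₂⟩ : C₀ ≤ B ∧ C₁ ≤ B ∧ C₂ ≤ B := by simpa only [max_le_iff] using hB
  have hD : ∀ x, ‖fderiv ℝ h x‖ ≤ B := fun x => by
    rw [← norm_iteratedFDeriv_one]; exact (hC₁ x).trans hB₁
  refine ⟨.of_fderiv (hh.differentiable two_ne_zero) (fun x => ?_) hD,
    .of_fderiv ((hh.fderiv_right (by norm_num)).differentiable one_ne_zero) hD (fun x => ?_)⟩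
  · rw [← norm_iteratedFDeriv_zero (𝕜 := ℝ)]; exact (hC₀ x).trans hB₀
  · rw [← norm_iteratedFDeriv_one, norm_iteratedFDeriv_fderiv]; exact (hC₂ x).trans hB₂

theorem norm_sub_taylor_two_le {γ γ' γ'' : ℝ → F} {K t : ℝ} (ht : 0 ≤ t)
    (hγ : ∀ s, HasDerivAt γ (γ' s) s) (hγ' : ∀ s, HasDerivAt γ' (γ'' s) s)
    (hγ'' : ∀ s ∈ Icc 0 t, ‖γ'' s - γ'' 0‖ ≤ K * s) :
    ‖γ t - γ 0 - t • γ' 0 - (t ^ 2 / 2) • γ'' 0‖ ≤ K * t ^ 3 / 6 := by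
  have hsq : ∀ s : ℝ, HasDerivAt (fun s : ℝ => s ^ 2 / 2) s s := fun s => by
    simpa using (hasDerivAt_pow 2 s).div_const 2
  have hcube : ∀ s : ℝ, HasDerivAt (fun s : ℝ => K * s ^ 3 / 6) (K * (s ^ 2 / 2)) s := fun s =>
    ((hasDerivAt_pow 3 s).const_mul K).div_const 6 |>.congr_deriv (by norm_num; ring)
  have hw : ∀ s, HasDerivAt (fun s => γ' s - γ' 0 - s • γ'' 0) (γ'' s - γ'' 0) s := fun s =>
    ((hγ' s).sub_const (γ' 0)).sub ((hasDerivAt_id' s).smul_const (γ'' 0)) |>.congr_deriv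
      (by rw [one_smul])
  have hψ : ∀ s, HasDerivAt (fun s => γ s - γ 0 - s • γ' 0 - (s ^ 2 / 2) • γ'' 0)
      (γ' s - γ' 0 - s • γ'' 0) s := fun s =>
    (((hγ s).sub_const (γ 0)).sub ((hasDerivAt_id' s).smul_const (γ' 0))).sub
      ((hsq s).smul_const (γ'' 0)) |>.congr_deriv (by rw [one_smul])
  have hw_le : ∀ s ∈ Icc 0 t, ‖γ' s - γ' 0 - s • γ'' 0‖ ≤ K * (s ^ 2 / 2) :=
    image_norm_le_of_norm_deriv_right_le_deriv_boundary
      (fun s _ => (hw s).continuousAt.continuousWithinAt) (fun s _ => (hw s).hasDerivWithinAt)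
      (by simp) (fun s => (hsq s).const_mul K) (fun s hs => hγ'' s (Ico_subset_Icc_self hs))
  simpa using image_norm_le_of_norm_deriv_right_le_deriv_boundary
    (fun s _ => (hψ s).continuousAt.continuousWithinAt) (fun s _ => (hψ s).hasDerivWithinAt)
    (by simp) hcube (fun s hs => hw_le s (Ico_subset_Icc_self hs)) (right_mem_Icc.2 ht)

theorem norm_sub_taylor_two_le_of_hasDerivAt {z : ℝ → E} {φ : ℝ → F} {V : E → E} {P : E → F}
    {P' : E → E →L[ℝ] F} {M K t : ℝ} (ht : 0 ≤ t) (hK : 0 ≤ K)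
    (hz : ∀ s, HasDerivAt z (V (z s)) s) (hφ : ∀ s, HasDerivAt φ (P (z s)) s)
    (hP : ∀ x, HasFDerivAt P (P' x) x) (hV : ∀ x, ‖V x‖ ≤ M)
    (hPV : ∀ x y, ‖P' x (V x) - P' y (V y)‖ ≤ K * ‖x - y‖) :
    ‖φ t - φ 0 - t • P (z 0) - (t ^ 2 / 2) • P' (z 0) (V (z 0))‖ ≤ K * M * t ^ 3 / 6 := by
  refine norm_sub_taylor_two_le ht hφ (fun s => (hP (z s)).comp_hasDerivAt s (hz s))
    fun s hs => ?_
  have hzs : ‖z s - z 0‖ ≤ M * (s - 0) :=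
    norm_image_sub_le_of_norm_deriv_le_segment' (fun x _ => (hz x).hasDerivWithinAt)
      (fun x _ => hV _) s hs
  calc ‖P' (z s) (V (z s)) - P' (z 0) (V (z 0))‖ ≤ K * ‖z s - z 0‖ := hPV _ _
    _ ≤ K * (M * (s - 0)) := mul_le_mul_of_nonneg_left hzs hK
    _ = K * M * s := by ring

theorem norm_apply_perturbation_sub_le (L L₁ : E × E' →L[ℝ] F) (a a₁ : E) (b b₁ : E')
    {τ c B : ℝ} (hτ : 0 ≤ τ) (hc : 0 ≤ c) (hL : ‖L‖ ≤ B) (hL₁ : ‖L₁‖ ≤ B) (ha₁ : ‖a₁‖ ≤ B)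
    (hb₁ : ‖b₁‖ ≤ B) (hv : ‖(a + τ • a₁, b + (c * τ) • b₁)‖ ≤ 2 * B) :
    ‖(L + τ • L₁) (a + τ • a₁, b + (c * τ) • b₁) - L (a, b)‖ ≤ (3 + c) * B ^ 2 * τ := by
  have hB : 0 ≤ B := (norm_nonneg _).trans hL
  have hw : ‖(a₁, c • b₁)‖ ≤ (1 + c) * B := norm_prod_le_iff.2
    ⟨by nlinarith, by rw [norm_smul, Real.norm_of_nonneg hc]; nlinarith⟩
  have hsplit : (L + τ • L₁) (a + τ • a₁, b + (c * τ) • b₁) - L (a, b)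
      = τ • (L (a₁, c • b₁) + L₁ (a + τ • a₁, b + (c * τ) • b₁)) := by
    have hpair : ((a + τ • a₁, b + (c * τ) • b₁) : E × E') = (a, b) + τ • (a₁, c • b₁) := by
      ext <;> simp [mul_smul, mul_comm c τ]
    rw [add_apply, smul_apply, hpair, map_add, map_smul]
    module
  calc _ = τ * ‖L (a₁, c • b₁) + L₁ (a + τ • a₁, b + (c * τ) • b₁)‖ := by
        rw [hsplit, norm_smul, Real.norm_of_nonneg hτ]
    _ ≤ τ * (B * ((1 + c) * B) + B * (2 * B)) := by
        gcongr
        exact norm_add_le_of_le ((L.le_opNorm _).trans (mul_le_mul hL hw (norm_nonneg _) hB))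
          ((L₁.le_opNorm _).trans (mul_le_mul hL₁ hv (norm_nonneg _) hB))
    _ = (3 + c) * B ^ 2 * τ := by ring

theorem norm_modified_flow_sub_taylor_le {f f₁ : E × E' → E} {g g₁ : E × E' → E'}
    {φ : ℝ → E} {θ : ℝ → E'} {B c τ : ℝ} (hc : 0 ≤ c) (hτ : 0 ≤ τ) (hτ₁ : τ ≤ 1)
    (hcτ₁ : c * τ ≤ 1) (hf : Differentiable ℝ f) (hf₁ : Differentiable ℝ f₁)
    (hf₀ : BoundedLipschitzWith B f) (hf' : BoundedLipschitzWith B (fderiv ℝ f))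
    (hf₁₀ : BoundedLipschitzWith B f₁) (hf₁' : BoundedLipschitzWith B (fderiv ℝ f₁))
    (hg₀ : BoundedLipschitzWith B g) (hg₁₀ : BoundedLipschitzWith B g₁)
    (hφ : ∀ s, HasDerivAt φ (f (φ s, θ s) + τ • f₁ (φ s, θ s)) s)
    (hθ : ∀ s, HasDerivAt θ (g (φ s, θ s) + (c * τ) • g₁ (φ s, θ s)) s) :
    ‖φ τ - (φ 0 + τ • f (φ 0, θ 0) + τ ^ 2 • (f₁ (φ 0, θ 0)
        + (1 / 2 : ℝ) • fderiv ℝ f (φ 0, θ 0) (f (φ 0, θ 0), 0)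
        + (1 / 2 : ℝ) • fderiv ℝ f (φ 0, θ 0) (0, g (φ 0, θ 0))))‖
      ≤ (8 * B ^ 3 / 3 + (3 + c) * B ^ 2 / 2) * τ ^ 3 := by
  have hB : 0 ≤ B := (norm_nonneg _).trans (hf₀.1 0)
  have hτ_abs : |τ| ≤ 1 := abs_le.2 ⟨by linarith, hτ₁⟩
  have hcτ_abs : |c * τ| ≤ 1 := abs_le.2 ⟨by nlinarith, hcτ₁⟩
  have hV := (hf₀.add_smul hf₁₀ hτ_abs).prodMk (hg₀.add_smul hg₁₀ hcτ_abs)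
  have hP : ∀ x, HasFDerivAt (fun x => f x + τ • f₁ x) (fderiv ℝ f x + τ • fderiv ℝ f₁ x) x :=
    fun x => (hf x).hasFDerivAt.add ((hf₁ x).hasFDerivAt.const_smul τ)
  have htaylor := norm_sub_taylor_two_le_of_hasDerivAt (z := fun s => (φ s, θ s))
    (V := fun x => (f x + τ • f₁ x, g x + (c * τ) • g₁ x)) hτ (by positivity)
    (fun s => (hφ s).prodMk (hθ s)) hφ hP hV.1
    ((hf'.add_smul hf₁' hτ_abs).norm_apply_sub_apply_le hV)
  have hcoeff := norm_apply_perturbation_sub_le (fderiv ℝ f (φ 0, θ 0)) (fderiv ℝ f₁ (φ 0, θ 0))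
    (f (φ 0, θ 0)) (f₁ (φ 0, θ 0)) (g (φ 0, θ 0)) (g₁ (φ 0, θ 0)) hτ hc (hf'.1 _) (hf₁'.1 _)
    (hf₁₀.1 _) (hg₁₀.1 _) (hV.1 _)
  beta_reduce at htaylor
  set L := fderiv ℝ f (φ 0, θ 0)
  set A := (L + τ • fderiv ℝ f₁ (φ 0, θ 0))
    (f (φ 0, θ 0) + τ • f₁ (φ 0, θ 0), g (φ 0, θ 0) + (c * τ) • g₁ (φ 0, θ 0))
  have hL : L (f (φ 0, θ 0), g (φ 0, θ 0)) = L (f (φ 0, θ 0), 0) + L (0, g (φ 0, θ 0)) := by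
    rw [← map_add, Prod.mk_add_mk, add_zero, zero_add]
  rw [hL] at hcoeff
  calc _ = ‖(φ τ - φ 0 - τ • (f (φ 0, θ 0) + τ • f₁ (φ 0, θ 0)) - (τ ^ 2 / 2) • A)
        + (τ ^ 2 / 2) • (A - (L (f (φ 0, θ 0), 0) + L (0, g (φ 0, θ 0))))‖ := by
        congr 1; module
    _ ≤ 2 * (2 * B) * (2 * B) * (2 * B) * τ ^ 3 / 6 + τ ^ 2 / 2 * ((3 + c) * B ^ 2 * τ) := by
        refine norm_add_le_of_le htaylor ?_
        rw [norm_smul, Real.norm_of_nonneg (by positivity)]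
        gcongr
    _ = _ := by ring

end

/-- **Lemma (Taylor expansion of the modified-flow solution).**
If `(φ(s), θ(s))` solves `dφ/ds = f + τ·f₁`, `dθ/ds = g + cτ·g₁` with initial condition
`(φ₀, θ₀)`, then as `τ → 0⁺`,
`φ(τ) = φ₀ + τ f + τ²(f₁ + (1/2) f·∇_φ f + (1/2) g·∇_θ f) + O(τ³)`,
where `f`, `g`, `f₁` and the derivatives are evaluated at `(φ₀, θ₀)`. -/
theorem modified_flow_taylor_expansion {m n : ℕ}
    (f f₁ : EuclideanSpace ℝ (Fin m) × EuclideanSpace ℝ (Fin n) → EuclideanSpace ℝ (Fin m))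
    (g g₁ : EuclideanSpace ℝ (Fin m) × EuclideanSpace ℝ (Fin n) → EuclideanSpace ℝ (Fin n))
    (hf : ContDiff ℝ 2 f) (hg : ContDiff ℝ 2 g)
    (hf₁ : ContDiff ℝ 2 f₁) (hg₁ : ContDiff ℝ 2 g₁)
    (hfb : ∀ i : ℕ, i ≤ 2 → ∃ C : ℝ, ∀ z, ‖iteratedFDeriv ℝ i f z‖ ≤ C)
    (hgb : ∀ i : ℕ, i ≤ 2 → ∃ C : ℝ, ∀ z, ‖iteratedFDeriv ℝ i g z‖ ≤ C)
    (hf₁b : ∀ i : ℕ, i ≤ 2 → ∃ C : ℝ, ∀ z, ‖iteratedFDeriv ℝ i f₁ z‖ ≤ C)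
    (hg₁b : ∀ i : ℕ, i ≤ 2 → ∃ C : ℝ, ∀ z, ‖iteratedFDeriv ℝ i g₁ z‖ ≤ C)
    (c : ℝ) (hc : 0 < c)
    (φ0 : EuclideanSpace ℝ (Fin m)) (θ0 : EuclideanSpace ℝ (Fin n))
    -- the solution `s ↦ (φs τ s, θs τ s)` of the modified system, for parameter `τ`
    (φs : ℝ → ℝ → EuclideanSpace ℝ (Fin m))
    (θs : ℝ → ℝ → EuclideanSpace ℝ (Fin n))
    (hinitφ : ∀ τ : ℝ, 0 < τ → φs τ 0 = φ0)
    (hinitθ : ∀ τ : ℝ, 0 < τ → θs τ 0 = θ0)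
    (hodeφ : ∀ τ : ℝ, 0 < τ → ∀ s : ℝ,
      HasDerivAt (φs τ) (f (φs τ s, θs τ s) + τ • f₁ (φs τ s, θs τ s)) s)
    (hodeθ : ∀ τ : ℝ, 0 < τ → ∀ s : ℝ,
      HasDerivAt (θs τ) (g (φs τ s, θs τ s) + (c * τ) • g₁ (φs τ s, θs τ s)) s) :
    ∃ C > (0 : ℝ), ∃ τ0 > (0 : ℝ), ∀ τ : ℝ, 0 < τ → τ < τ0 →
      ‖φs τ τ -
          (φ0 + τ • f (φ0, θ0) +
            (τ ^ 2) •
              (f₁ (φ0, θ0) + (1 / 2 : ℝ) • fderiv ℝ f (φ0, θ0) (f (φ0, θ0), 0) +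
                (1 / 2 : ℝ) • fderiv ℝ f (φ0, θ0) (0, g (φ0, θ0))))‖ ≤ C * τ ^ 3 := by
  obtain ⟨B, hB, ⟨hf₀, hf'⟩, ⟨hg₀, -⟩, ⟨hf₁₀, hf₁'⟩, ⟨hg₁₀, -⟩⟩ :=
    ((eventually_gt_atTop 0).and <| (eventually_boundedLipschitzWith_fderiv hf hfb).and <|
      (eventually_boundedLipschitzWith_fderiv hg hgb).and <|
        (eventually_boundedLipschitzWith_fderiv hf₁ hf₁b).and
          (eventually_boundedLipschitzWith_fderiv hg₁ hg₁b)).exists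
  refine ⟨8 * B ^ 3 / 3 + (3 + c) * B ^ 2 / 2, by positivity, min 1 c⁻¹, by positivity,
    fun τ hτ hτ₀ => ?_⟩
  have hτ₁ : τ ≤ 1 := (hτ₀.trans_le (min_le_left _ _)).le
  have hcτ₁ : c * τ ≤ 1 := by
    nlinarith [mul_inv_cancel₀ hc.ne', hτ₀.trans_le (min_le_right 1 c⁻¹)]
  have h := norm_modified_flow_sub_taylor_le hc.le hτ.le hτ₁ hcτ₁
    (hf.differentiable two_ne_zero) (hf₁.differentiable two_ne_zero) hf₀ hf' hf₁₀ hf₁' hg₀ hg₁₀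
    (hodeφ τ hτ) (hodeθ τ hτ)
  rwa [hinitφ τ hτ, hinitθ τ hτ] at h
end

section
/- Let f : ℝ^m × ℝ^n → ℝ^m be twice continuously differentiable with bounded derivatives, fix θ₀ ∈ ℝ^n, φ₀ ∈ ℝ^m and a positive integer m'. For h > 0 define iterates φ^{(i)} = φ^{(i−1)} + h·f(φ^{(i−1)}, θ₀), i = 1,…,m', with φ^{(0)} = φ₀. Then φ^{(m')} = φ₀ + m'h·f(φ₀, θ₀) + (m'(m'−1)/2)·h²·f(φ₀, θ₀)·∇_φ f(φ₀, θ₀) + O(h³), i.e. there exist C > 0 and h₀ > 0 such that the difference between the two sides is at most C h³ in norm for all 0 < h < h₀. -/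
/-!
Write `g := f (·, θ₀)`, so that one Euler step is `x ↦ x + h • g x`, and compare the `k`-th iterate
with `x₀ + k h g + k (k - 1) / 2 h² Dg g` (everything at `x₀`) by induction on `k`. The induction
hypothesis makes the iterate `O(h)`-close to `x₀` and `x - x₀ - k h g` of size `O(h²)`. In the next
step the increment `h (g x - g x₀ - k h Dg g)` splits into `h` times the Taylor remainder of `g`
(which is `O(‖x - x₀‖²) = O(h²)` because `Dg` is locally Lipschitz) plus `h Dg (x - x₀ - k h g)`,
so the error grows only by `O(h³)`.
-/

open Asymptotics Filter Metric Topology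

theorem ContDiffAt.isBigO_sub_sub_fderiv {E F : Type*} [NormedAddCommGroup E] [NormedSpace ℝ E]
    [NormedAddCommGroup F] [NormedSpace ℝ F] {g : E → F} {x₀ : E} (hg : ContDiffAt ℝ 2 g x₀) :
    (fun x => g x - g x₀ - fderiv ℝ g x₀ (x - x₀)) =O[𝓝 x₀] fun x => ‖x - x₀‖ ^ 2 := by
  obtain ⟨K, t, ht, hK⟩ := (hg.fderiv_right (m := 1) le_rfl).exists_lipschitzOnWith
  have hdiff : ∀ᶠ y in 𝓝 x₀, DifferentiableAt ℝ g y :=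
    (hg.eventually (by simp)).mono fun y hy => hy.differentiableAt (by norm_num)
  obtain ⟨r, hr, hball⟩ := Metric.mem_nhds_iff.1 (inter_mem ht hdiff)
  refine IsBigO.of_bound K ?_
  filter_upwards [ball_mem_nhds x₀ hr] with x hx
  have hsub : closedBall x₀ ‖x - x₀‖ ⊆ ball x₀ r :=
    closedBall_subset_ball (by rwa [← dist_eq_norm])
  have hbound : ∀ y ∈ closedBall x₀ ‖x - x₀‖,
      ‖fderiv ℝ g y - fderiv ℝ g x₀‖ ≤ K * ‖x - x₀‖ := fun y hy =>
    (hK.norm_sub_le (hball (hsub hy)).1 (hball (mem_ball_self hr)).1).trans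
      (by gcongr; rwa [← dist_eq_norm])
  calc ‖g x - g x₀ - fderiv ℝ g x₀ (x - x₀)‖
      ≤ K * ‖x - x₀‖ * ‖x - x₀‖ :=
        (convex_closedBall x₀ _).norm_image_sub_le_of_norm_fderiv_le'
          (fun y hy => (hball (hsub hy)).2) hbound (mem_closedBall_self (norm_nonneg _))
          (by rw [mem_closedBall, dist_eq_norm])
    _ = K * ‖‖x - x₀‖ ^ 2‖ := by rw [norm_pow, norm_norm]; ring

section

variable {E : Type*} [NormedAddCommGroup E] [NormedSpace ℝ E]

theorem isBigO_const_mul_smul_const {α : Type*} (l : Filter α) (c : ℝ) (f : α → ℝ) (w : E) :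
    (fun x => (c * f x) • w) =O[l] f :=
  IsBigO.of_bound (‖c‖ * ‖w‖) <| Eventually.of_forall fun x => by
    rw [norm_smul, norm_mul]; exact le_of_eq (by ring)

noncomputable def eulerStep (g : E → E) (h : ℝ) (x : E) : E := x + h • g x

noncomputable def eulerApprox (g : E → E) (x₀ : E) (k : ℕ) (h : ℝ) : E :=
  x₀ + ((k : ℝ) * h) • g x₀ + ((k : ℝ) * ((k : ℝ) - 1) / 2 * h ^ 2) • fderiv ℝ g x₀ (g x₀)

theorem isBigO_eulerStep_iterate_sub_eulerApprox {g : E → E} {x₀ : E}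
    (hg : ContDiffAt ℝ 2 g x₀) (k : ℕ) :
    (fun h => (eulerStep g h)^[k] x₀ - eulerApprox g x₀ k h) =O[𝓝 0] fun h => h ^ 3 := by
  induction k with
  | zero => simpa [eulerApprox] using isBigO_zero _ _
  | succ k ih =>
    set D := fderiv ℝ g x₀
    set x := fun h => (eulerStep g h)^[k] x₀
    have hfirst : (fun h => x h - x₀ - ((k : ℝ) * h) • g x₀) =O[𝓝 0] fun h => h ^ 2 := by
      have hsplit : (fun h => x h - x₀ - ((k : ℝ) * h) • g x₀) = fun h =>
          (x h - eulerApprox g x₀ k h) + ((k : ℝ) * ((k : ℝ) - 1) / 2 * h ^ 2) • D (g x₀) := by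
        ext h; simp only [eulerApprox]; abel
      rw [hsplit]
      exact (ih.trans (isLittleO_pow_pow (by norm_num)).isBigO).add
        (isBigO_const_mul_smul_const _ _ _ _)
    have hzeroth : (fun h => x h - x₀) =O[𝓝 0] fun h => h := by
      have hsplit : (fun h => x h - x₀) = fun h =>
          (x h - x₀ - ((k : ℝ) * h) • g x₀) + ((k : ℝ) * h) • g x₀ := by
        ext h; abel
      rw [hsplit]
      exact (hfirst.trans (isLittleO_pow_id (by norm_num)).isBigO).add
        (isBigO_const_mul_smul_const _ _ _ _)
    have hx : Tendsto x (𝓝 0) (𝓝 x₀) := by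
      have := hzeroth.trans_tendsto (tendsto_id (x := 𝓝 (0 : ℝ)))
      rwa [tendsto_sub_nhds_zero_iff] at this
    have htaylor : (fun h => g (x h) - g x₀ - D (x h - x₀)) =O[𝓝 0] fun h => h ^ 2 :=
      (hg.isBigO_sub_sub_fderiv.comp_tendsto hx).trans (hzeroth.norm_left.pow 2)
    -- `eulerApprox g x₀ (k + 1) h - eulerApprox g x₀ k h = h • g x₀ + (k * h ^ 2) • D (g x₀)`
    have hstep : (fun h => (eulerStep g h)^[k + 1] x₀ - eulerApprox g x₀ (k + 1) h) = fun h =>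
        (x h - eulerApprox g x₀ k h) +
          h • ((g (x h) - g x₀ - D (x h - x₀)) + D (x h - x₀ - ((k : ℝ) * h) • g x₀)) := by
      ext h
      simp only [Function.iterate_succ_apply', eulerStep, eulerApprox, map_sub, map_smul,
        Nat.cast_succ, x]
      module
    rw [hstep]
    refine ih.add (((isBigO_refl _ _).smul (htaylor.add
      ((D.isBigO_comp _ _).trans hfirst))).trans ?_)
    simp only [smul_eq_mul, ← pow_succ']
    exact isBigO_refl _ _

end

theorem fderiv_comp_prodMk_const_apply {E F G : Type*} [NormedAddCommGroup E] [NormedSpace ℝ E]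
    [NormedAddCommGroup F] [NormedSpace ℝ F] [NormedAddCommGroup G] [NormedSpace ℝ G]
    {f : E × F → G} {x : E} {y : F} (hf : DifferentiableAt ℝ f (x, y)) (v : E) :
    fderiv ℝ (fun x' => f (x', y)) x v = fderiv ℝ f (x, y) (v, 0) := by
  have hcomp : HasFDerivAt (fun x' => f (x', y)) ((fderiv ℝ f (x, y)).comp (.inl ℝ E F)) x :=
    hf.hasFDerivAt.comp x (hasFDerivAt_prodMk_left x y)
  rw [hcomp.fderiv]
  rfl

theorem frozen_player_euler_iterates_expansion_general {m n : ℕ}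
    (f : EuclideanSpace ℝ (Fin m) × EuclideanSpace ℝ (Fin n) → EuclideanSpace ℝ (Fin m))
    (hf : ContDiff ℝ 2 f)
    (θ0 : EuclideanSpace ℝ (Fin n)) (φ0 : EuclideanSpace ℝ (Fin m))
    (m' : ℕ)
    -- the iterates `φit h i` for step size `h`
    (φit : ℝ → ℕ → EuclideanSpace ℝ (Fin m))
    (hφit0 : ∀ h : ℝ, φit h 0 = φ0)
    (hφitS : ∀ h : ℝ, ∀ i : ℕ, i < m' →
      φit h (i + 1) = φit h i + h • f (φit h i, θ0)) :
    ∃ C > (0 : ℝ), ∃ h0 > (0 : ℝ), ∀ h : ℝ, 0 < h → h < h0 →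
      ‖φit h m' -
          (φ0 + ((m' : ℝ) * h) • f (φ0, θ0) +
            ((m' : ℝ) * ((m' : ℝ) - 1) / 2 * h ^ 2) •
              fderiv ℝ f (φ0, θ0) (f (φ0, θ0), 0))‖ ≤ C * h ^ 3 := by
  set g := fun φ => f (φ, θ0)
  have hg : ContDiffAt ℝ 2 g φ0 := (hf.comp (contDiff_id.prodMk contDiff_const)).contDiffAt
  have hiter : ∀ h, ∀ i ≤ m', φit h i = (eulerStep g h)^[i] φ0 := by
    intro h i hi
    induction i with
    | zero => exact hφit0 h
    | succ i ih =>
      rw [hφitS h i hi, ih (by omega), Function.iterate_succ_apply']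
      rfl
  have happrox : ∀ h, eulerApprox g φ0 m' h = φ0 + ((m' : ℝ) * h) • f (φ0, θ0) +
      ((m' : ℝ) * ((m' : ℝ) - 1) / 2 * h ^ 2) • fderiv ℝ f (φ0, θ0) (f (φ0, θ0), 0) := fun h => by
    rw [eulerApprox, fderiv_comp_prodMk_const_apply (hf.differentiable (by norm_num) _)]
  obtain ⟨C, hC, hbound⟩ := (isBigO_eulerStep_iterate_sub_eulerApprox hg m').exists_pos
  obtain ⟨h0, hh0, hball⟩ := Metric.eventually_nhds_iff.1 hbound.bound
  refine ⟨C, hC, h0, hh0, fun h hpos hlt => ?_⟩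
  have hh := hball (show dist h 0 < h0 by rwa [Real.dist_0_eq_abs, abs_of_pos hpos])
  rwa [norm_pow, Real.norm_of_nonneg hpos.le, happrox, ← hiter h m' le_rfl] at hh

/-- **Lemma (multiple Euler sub-steps of one player).**
For the iterates `φ⁽ⁱ⁾ = φ⁽ⁱ⁻¹⁾ + h·f(φ⁽ⁱ⁻¹⁾, θ₀)` with the other player frozen,
`φ⁽ᵐ⁾ = φ₀ + m'h·f + (m'(m'−1)/2)·h²·f·∇_φ f + O(h³)`,
where `f` and its derivative are evaluated at `(φ₀, θ₀)`. -/
theorem frozen_player_euler_iterates_expansion {m n : ℕ}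
    (f : EuclideanSpace ℝ (Fin m) × EuclideanSpace ℝ (Fin n) → EuclideanSpace ℝ (Fin m))
    (hf : ContDiff ℝ 2 f)
    (hfb : ∀ i : ℕ, i ≤ 2 → ∃ C : ℝ, ∀ z, ‖iteratedFDeriv ℝ i f z‖ ≤ C)
    (θ0 : EuclideanSpace ℝ (Fin n)) (φ0 : EuclideanSpace ℝ (Fin m))
    (m' : ℕ) (hm' : 0 < m')
    -- the iterates `φit h i` for step size `h`
    (φit : ℝ → ℕ → EuclideanSpace ℝ (Fin m))
    (hφit0 : ∀ h : ℝ, φit h 0 = φ0)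
    (hφitS : ∀ h : ℝ, ∀ i : ℕ, i < m' →
      φit h (i + 1) = φit h i + h • f (φit h i, θ0)) :
    ∃ C > (0 : ℝ), ∃ h0 > (0 : ℝ), ∀ h : ℝ, 0 < h → h < h0 →
      ‖φit h m' -
          (φ0 + ((m' : ℝ) * h) • f (φ0, θ0) +
            ((m' : ℝ) * ((m' : ℝ) - 1) / 2 * h ^ 2) •
              fderiv ℝ f (φ0, θ0) (f (φ0, θ0), 0))‖ ≤ C * h ^ 3 :=
  frozen_player_euler_iterates_expansion_general f hf θ0 φ0 m' φit hφit0 hφitS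
end

section
/- Let f : ℝ^m × ℝ^n → ℝ^m and g : ℝ^m × ℝ^n → ℝ^n be twice continuously differentiable with bounded derivatives, let α, λ > 0, and fix (φ₀, θ₀). Define the two-player Runge–Kutta-4 step: k₁ = (f, g) at (φ₀, θ₀); k₂ = (f, g) at (φ₀ + (αh/2)k₁^φ, θ₀ + (λh/2)k₁^θ); k₃ = (f, g) at (φ₀ + (αh/2)k₂^φ, θ₀ + (λh/2)k₂^θ); k₄ = (f, g) at (φ₀ + αh·k₃^φ, θ₀ + λh·k₃^θ); and φ₁ = φ₀ + αh·(k₁^φ + 2k₂^φ + 2k₃^φ + k₄^φ)/6, θ₁ = θ₀ + λh·(k₁^θ + 2k₂^θ + 2k₃^θ + k₄^θ)/6. Then φ₁ = φ₀ + αh·f + (1/2)αλh²·g·∇_θ f + (1/2)α²h²·f·∇_φ f + O(h³) and θ₁ = θ₀ + λh·g + (1/2)λ²h²·g·∇_θ g + (1/2)αλh²·f·∇_φ g + O(h³), where f, g and their derivatives are evaluated at (φ₀, θ₀). -/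
/-!
The two-player scheme is the classical Runge–Kutta-4 step, with step size `h`, for the rescaled
field `V = (α f, λ g)` on the product space; its `φ`- and `θ`-components are the claimed
expansions of `z + h V(z) + (h² / 2) DV(z) V(z)`. For a `C²` field, every stage has the form
`V (z + c h κ)` with `κ = V z + O(h)`, so second-order Taylor expansion gives
`V z + c h DV(z) V(z) + O(h²)`; with nodes `0, ½, ½, 1` and weights `1, 2, 2, 1` the first-order
terms add up to exactly `(h² / 2) DV(z) V(z)`.
-/

open Asymptotics Filter Topology

theorem Asymptotics.IsBigO.smul_const {α E : Type*} [NormedAddCommGroup E] [NormedSpace ℝ E]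
    {l : Filter α} {s g : α → ℝ} (hs : s =O[l] g) (v : E) : (fun x => s x • v) =O[l] g := by
  simpa using hs.smul (isBigO_const_one ℝ v l)

theorem Asymptotics.IsBigO.exists_norm_le_const_mul_pow {F : Type*} [NormedAddCommGroup F]
    {e : ℝ → F} {k : ℕ} (he : e =O[𝓝 0] fun h => h ^ k) :
    ∃ C > (0 : ℝ), ∃ h0 > (0 : ℝ), ∀ h : ℝ, 0 < h → h < h0 → ‖e h‖ ≤ C * h ^ k := by
  obtain ⟨C, hC, hCe⟩ := he.exists_pos
  obtain ⟨h0, hh0, hbound⟩ := Metric.eventually_nhds_iff.1 hCe.bound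
  refine ⟨C, hC, h0, hh0, fun h hpos hlt => ?_⟩
  have := hbound (y := h) (by rwa [Real.dist_0_eq_abs, abs_of_pos hpos])
  rwa [norm_pow, Real.norm_of_nonneg hpos.le] at this

theorem ContinuousLinearMap.apply_smul_prod {R E₁ E₂ F : Type*} [Semiring R]
    [AddCommMonoid E₁] [Module R E₁] [TopologicalSpace E₁]
    [AddCommMonoid E₂] [Module R E₂] [TopologicalSpace E₂]
    [AddCommMonoid F] [Module R F] [TopologicalSpace F]
    (L : E₁ × E₂ →L[R] F) (a b : R) (x : E₁) (y : E₂) :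
    L (a • x, b • y) = a • L (x, 0) + b • L (0, y) := by
  rw [show (a • x, b • y) = a • (x, 0) + b • (0, y) by simp, map_add, map_smul, map_smul]

section Taylor

variable {E F : Type*} [NormedAddCommGroup E] [NormedSpace ℝ E]
  [NormedAddCommGroup F] [NormedSpace ℝ F]

theorem ContDiffAt.isBigO_add_sub_sub_fderiv {f : E → F} {x : E} (hf : ContDiffAt ℝ 2 f x) :
    (fun w => f (x + w) - f x - fderiv ℝ f x w) =O[𝓝 0] fun w => ‖w‖ ^ 2 := by
  obtain ⟨K, t, ht, hK⟩ := (hf.fderiv_right (m := 1) (by norm_num)).exists_lipschitzOnWith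
  have hdiff : ∀ᶠ y in 𝓝 x, DifferentiableAt ℝ f y :=
    (hf.eventually (by simp)).mono fun y hy => hy.differentiableAt (by norm_num)
  obtain ⟨ε, hε, hball⟩ := Metric.mem_nhds_iff.1 (inter_mem ht hdiff)
  refine IsBigO.of_bound K ?_
  filter_upwards [Metric.ball_mem_nhds 0 hε] with w hw
  have hsub : Metric.closedBall x ‖w‖ ⊆ t ∩ {y | DifferentiableAt ℝ f y} :=
    (Metric.closedBall_subset_ball (by simpa using hw)).trans hball
  have hx : x ∈ Metric.closedBall x ‖w‖ := Metric.mem_closedBall_self (norm_nonneg w)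
  have hderiv : ∀ y ∈ Metric.closedBall x ‖w‖, ‖fderiv ℝ f y - fderiv ℝ f x‖ ≤ K * ‖w‖ := by
    intro y hy
    rw [← dist_eq_norm]
    exact (hK.dist_le_mul y (hsub hy).1 x (hsub hx).1).trans (by gcongr; exact hy)
  have := (convex_closedBall x ‖w‖).norm_image_sub_le_of_norm_fderiv_le'
    (fun y hy => (hsub hy).2) hderiv hx (y := x + w) (by simp)
  simpa [sq, mul_assoc] using this

variable {V : E → F} {z v : E} {s : ℝ → ℝ} {κ : ℝ → E}

theorem ContDiffAt.isBigO_add_smul_sub_sub_fderiv (hV : ContDiffAt ℝ 2 V z)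
    (hs : s =O[𝓝 0] id) (hκ : (fun h => κ h - v) =O[𝓝 0] id) :
    (fun h => V (z + s h • κ h) - V z - s h • fderiv ℝ V z v) =O[𝓝 0] fun h => h ^ 2 := by
  have hsq : (fun h : ℝ => h ^ 2) =O[𝓝 0] id := (isLittleO_pow_id one_lt_two).isBigO
  have hdev : (fun h => s h • κ h - s h • v) =O[𝓝 0] fun h => h ^ 2 := by
    simpa only [smul_sub, smul_eq_mul, id_eq, sq] using hs.smul hκ
  have hw : (fun h => s h • κ h) =O[𝓝 0] id :=
    ((hdev.trans hsq).add (hs.smul_const v)).congr_left fun _ => sub_add_cancel _ _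
  have htaylor := (hV.isBigO_add_sub_sub_fderiv.comp_tendsto
    (hw.trans_tendsto tendsto_id)).trans (hw.norm_left.pow 2)
  refine (htaylor.add ((fderiv ℝ V z).isBigO_comp _ _ |>.trans hdev)).congr_left fun h => ?_
  simp only [Function.comp_apply, map_sub, map_smul]
  abel

theorem ContDiffAt.isBigO_add_smul_sub (hV : ContDiffAt ℝ 2 V z)
    (hs : s =O[𝓝 0] id) (hκ : (fun h => κ h - v) =O[𝓝 0] id) :
    (fun h => V (z + s h • κ h) - V z) =O[𝓝 0] id :=
  (((hV.isBigO_add_smul_sub_sub_fderiv hs hκ).trans (isLittleO_pow_id one_lt_two).isBigO).add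
    (hs.smul_const _)).congr_left fun _ => sub_add_cancel _ _

end Taylor

theorem ContDiffAt.isBigO_rk4_increment_sub_taylor {E : Type*} [NormedAddCommGroup E]
    [NormedSpace ℝ E] {V : E → E} {z : E} (hV : ContDiffAt ℝ 2 V z)
    {κ₂ κ₃ κ₄ : ℝ → E} (h₂ : ∀ h, κ₂ h = V (z + (h / 2) • V z))
    (h₃ : ∀ h, κ₃ h = V (z + (h / 2) • κ₂ h)) (h₄ : ∀ h, κ₄ h = V (z + h • κ₃ h)) :
    (fun h => (h / 6) • (V z + (2 : ℝ) • κ₂ h + (2 : ℝ) • κ₃ h + κ₄ h) - h • V z -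
      (h ^ 2 / 2) • fderiv ℝ V z (V z)) =O[𝓝 0] fun h => h ^ 3 := by
  have hdiv : ∀ c : ℝ, (fun h : ℝ => h / c) =O[𝓝 0] id := fun c => by
    simpa only [div_eq_inv_mul, id_eq] using isBigO_const_mul_self c⁻¹ id (𝓝 0)
  have hκ₁ : (fun _ : ℝ => V z - V z) =O[𝓝 0] (id : ℝ → ℝ) := by simpa using isBigO_zero _ _
  have hκ₂ : (fun h => κ₂ h - V z) =O[𝓝 0] id := by
    simpa only [← h₂] using hV.isBigO_add_smul_sub (hdiv 2) hκ₁
  have hκ₃ : (fun h => κ₃ h - V z) =O[𝓝 0] id := by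
    simpa only [← h₃] using hV.isBigO_add_smul_sub (hdiv 2) hκ₂
  have e₂ := hV.isBigO_add_smul_sub_sub_fderiv (hdiv 2) hκ₁
  have e₃ := hV.isBigO_add_smul_sub_sub_fderiv (hdiv 2) hκ₂
  have e₄ := hV.isBigO_add_smul_sub_sub_fderiv (isBigO_refl id _) hκ₃
  simp only [← h₂, ← h₃, ← h₄, id] at e₂ e₃ e₄
  refine (hdiv 6).smul (((e₂.const_smul_left (2 : ℝ)).add (e₃.const_smul_left (2 : ℝ))).add e₄)
    |>.congr' (Eventually.of_forall fun h => ?_) (Eventually.of_forall fun h => ?_)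
  · simp only [Pi.smul_apply]
    module
  · simp only [id, smul_eq_mul]
    ring

theorem two_player_rk4_expansion_general {m n : ℕ}
    (f : EuclideanSpace ℝ (Fin m) × EuclideanSpace ℝ (Fin n) → EuclideanSpace ℝ (Fin m))
    (g : EuclideanSpace ℝ (Fin m) × EuclideanSpace ℝ (Fin n) → EuclideanSpace ℝ (Fin n))
    (hf : ContDiff ℝ 2 f) (hg : ContDiff ℝ 2 g)
    (α lam : ℝ)
    (φ0 : EuclideanSpace ℝ (Fin m)) (θ0 : EuclideanSpace ℝ (Fin n))
    -- the four RK4 stages, as functions of the step size `h`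
    (k1φ k2φ k3φ k4φ : ℝ → EuclideanSpace ℝ (Fin m))
    (k1θ k2θ k3θ k4θ : ℝ → EuclideanSpace ℝ (Fin n))
    (hk1φ : ∀ h : ℝ, k1φ h = f (φ0, θ0))
    (hk1θ : ∀ h : ℝ, k1θ h = g (φ0, θ0))
    (hk2φ : ∀ h : ℝ, k2φ h = f (φ0 + (α * h / 2) • k1φ h, θ0 + (lam * h / 2) • k1θ h))
    (hk2θ : ∀ h : ℝ, k2θ h = g (φ0 + (α * h / 2) • k1φ h, θ0 + (lam * h / 2) • k1θ h))
    (hk3φ : ∀ h : ℝ, k3φ h = f (φ0 + (α * h / 2) • k2φ h, θ0 + (lam * h / 2) • k2θ h))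
    (hk3θ : ∀ h : ℝ, k3θ h = g (φ0 + (α * h / 2) • k2φ h, θ0 + (lam * h / 2) • k2θ h))
    (hk4φ : ∀ h : ℝ, k4φ h = f (φ0 + (α * h) • k3φ h, θ0 + (lam * h) • k3θ h))
    (hk4θ : ∀ h : ℝ, k4θ h = g (φ0 + (α * h) • k3φ h, θ0 + (lam * h) • k3θ h))
    -- the RK4 update
    (φ1 : ℝ → EuclideanSpace ℝ (Fin m)) (θ1 : ℝ → EuclideanSpace ℝ (Fin n))
    (hφ1 : ∀ h : ℝ, φ1 h =
      φ0 + (α * h / 6) • (k1φ h + (2 : ℝ) • k2φ h + (2 : ℝ) • k3φ h + k4φ h))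
    (hθ1 : ∀ h : ℝ, θ1 h =
      θ0 + (lam * h / 6) • (k1θ h + (2 : ℝ) • k2θ h + (2 : ℝ) • k3θ h + k4θ h)) :
    ∃ C > (0 : ℝ), ∃ h0 > (0 : ℝ), ∀ h : ℝ, 0 < h → h < h0 →
      ‖φ1 h -
          (φ0 + (α * h) • f (φ0, θ0) +
            (α * lam * h ^ 2 / 2) • fderiv ℝ f (φ0, θ0) (0, g (φ0, θ0)) +
            (α ^ 2 * h ^ 2 / 2) • fderiv ℝ f (φ0, θ0) (f (φ0, θ0), 0))‖ ≤ C * h ^ 3 ∧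
      ‖θ1 h -
          (θ0 + (lam * h) • g (φ0, θ0) +
            (lam ^ 2 * h ^ 2 / 2) • fderiv ℝ g (φ0, θ0) (0, g (φ0, θ0)) +
            (α * lam * h ^ 2 / 2) • fderiv ℝ g (φ0, θ0) (f (φ0, θ0), 0))‖ ≤ C * h ^ 3 := by
  set z := (φ0, θ0)
  set V := fun p => (α • f p, lam • g p)
  have hV : ContDiff ℝ 2 V := (hf.const_smul α).prodMk (hg.const_smul lam)
  have hDV : fderiv ℝ V z = (α • fderiv ℝ f z).prod (lam • fderiv ℝ g z) :=
    (((hf.differentiable two_ne_zero z).hasFDerivAt.const_smul α).prodMk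
      ((hg.differentiable two_ne_zero z).hasFDerivAt.const_smul lam)).fderiv
  have hstage : ∀ (s : ℝ) x y, z + s • (α • x, lam • y) = (φ0 + (α * s) • x, θ0 + (lam * s) • y) :=
    fun s x y => by simp [z, smul_smul, mul_comm]
  have hrk4 := hV.contDiffAt.isBigO_rk4_increment_sub_taylor (z := z)
    (κ₂ := fun h => (α • k2φ h, lam • k2θ h)) (κ₃ := fun h => (α • k3φ h, lam • k3θ h))
    (κ₄ := fun h => (α • k4φ h, lam • k4θ h))
    (fun h => by simp only [V, hk2φ, hk2θ, hk1φ, hk1θ, hstage, mul_div_assoc])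
    (fun h => by simp only [V, hk3φ, hk3θ, hstage, mul_div_assoc])
    (fun h => by simp only [V, hk4φ, hk4θ, hstage])
  obtain ⟨C, hC, h0, hh0, hbound⟩ := hrk4.exists_norm_le_const_mul_pow
  refine ⟨C, hC, h0, hh0, fun h hpos hlt => ⟨?_, ?_⟩⟩
  · refine (congrArg norm ?_).trans_le ((norm_fst_le _).trans (hbound h hpos hlt))
    simp only [hφ1, hDV, V, hk1φ, ContinuousLinearMap.prod_apply, smul_apply,
      Prod.smul_fst, Prod.fst_add, Prod.fst_sub]
    rw [(fderiv ℝ f z).apply_smul_prod α lam]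
    module
  · refine (congrArg norm ?_).trans_le ((norm_snd_le _).trans (hbound h hpos hlt))
    simp only [hθ1, hDV, V, hk1θ, ContinuousLinearMap.prod_apply, smul_apply,
      Prod.smul_snd, Prod.snd_add, Prod.snd_sub]
    rw [(fderiv ℝ g z).apply_smul_prod α lam]
    module

/-- **Expansion of the two-player Runge–Kutta-4 step.**
With per-player learning rates `αh` and `λh`,
`φ₁ = φ₀ + αh·f + (1/2)αλh²·g·∇_θ f + (1/2)α²h²·f·∇_φ f + O(h³)` and
`θ₁ = θ₀ + λh·g + (1/2)λ²h²·g·∇_θ g + (1/2)αλh²·f·∇_φ g + O(h³)`,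
where `f`, `g` and their derivatives are evaluated at `(φ₀, θ₀)`. -/
theorem two_player_rk4_expansion {m n : ℕ}
    (f : EuclideanSpace ℝ (Fin m) × EuclideanSpace ℝ (Fin n) → EuclideanSpace ℝ (Fin m))
    (g : EuclideanSpace ℝ (Fin m) × EuclideanSpace ℝ (Fin n) → EuclideanSpace ℝ (Fin n))
    (hf : ContDiff ℝ 2 f) (hg : ContDiff ℝ 2 g)
    (hfb : ∀ i : ℕ, i ≤ 2 → ∃ C : ℝ, ∀ z, ‖iteratedFDeriv ℝ i f z‖ ≤ C)
    (hgb : ∀ i : ℕ, i ≤ 2 → ∃ C : ℝ, ∀ z, ‖iteratedFDeriv ℝ i g z‖ ≤ C)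
    (α lam : ℝ) (hα : 0 < α) (hlam : 0 < lam)
    (φ0 : EuclideanSpace ℝ (Fin m)) (θ0 : EuclideanSpace ℝ (Fin n))
    -- the four RK4 stages, as functions of the step size `h`
    (k1φ k2φ k3φ k4φ : ℝ → EuclideanSpace ℝ (Fin m))
    (k1θ k2θ k3θ k4θ : ℝ → EuclideanSpace ℝ (Fin n))
    (hk1φ : ∀ h : ℝ, k1φ h = f (φ0, θ0))
    (hk1θ : ∀ h : ℝ, k1θ h = g (φ0, θ0))
    (hk2φ : ∀ h : ℝ, k2φ h = f (φ0 + (α * h / 2) • k1φ h, θ0 + (lam * h / 2) • k1θ h))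
    (hk2θ : ∀ h : ℝ, k2θ h = g (φ0 + (α * h / 2) • k1φ h, θ0 + (lam * h / 2) • k1θ h))
    (hk3φ : ∀ h : ℝ, k3φ h = f (φ0 + (α * h / 2) • k2φ h, θ0 + (lam * h / 2) • k2θ h))
    (hk3θ : ∀ h : ℝ, k3θ h = g (φ0 + (α * h / 2) • k2φ h, θ0 + (lam * h / 2) • k2θ h))
    (hk4φ : ∀ h : ℝ, k4φ h = f (φ0 + (α * h) • k3φ h, θ0 + (lam * h) • k3θ h))
    (hk4θ : ∀ h : ℝ, k4θ h = g (φ0 + (α * h) • k3φ h, θ0 + (lam * h) • k3θ h))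
    -- the RK4 update
    (φ1 : ℝ → EuclideanSpace ℝ (Fin m)) (θ1 : ℝ → EuclideanSpace ℝ (Fin n))
    (hφ1 : ∀ h : ℝ, φ1 h =
      φ0 + (α * h / 6) • (k1φ h + (2 : ℝ) • k2φ h + (2 : ℝ) • k3φ h + k4φ h))
    (hθ1 : ∀ h : ℝ, θ1 h =
      θ0 + (lam * h / 6) • (k1θ h + (2 : ℝ) • k2θ h + (2 : ℝ) • k3θ h + k4θ h)) :
    ∃ C > (0 : ℝ), ∃ h0 > (0 : ℝ), ∀ h : ℝ, 0 < h → h < h0 →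
      ‖φ1 h -
          (φ0 + (α * h) • f (φ0, θ0) +
            (α * lam * h ^ 2 / 2) • fderiv ℝ f (φ0, θ0) (0, g (φ0, θ0)) +
            (α ^ 2 * h ^ 2 / 2) • fderiv ℝ f (φ0, θ0) (f (φ0, θ0), 0))‖ ≤ C * h ^ 3 ∧
      ‖θ1 h -
          (θ0 + (lam * h) • g (φ0, θ0) +
            (lam ^ 2 * h ^ 2 / 2) • fderiv ℝ g (φ0, θ0) (0, g (φ0, θ0)) +
            (α * lam * h ^ 2 / 2) • fderiv ℝ g (φ0, θ0) (f (φ0, θ0), 0))‖ ≤ C * h ^ 3 :=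
  two_player_rk4_expansion_general f g hf hg α lam φ0 θ0 k1φ k2φ k3φ k4φ k1θ k2θ k3θ k4θ hk1φ hk1θ
    hk2φ hk2θ hk3φ hk3θ hk4φ hk4θ φ1 θ1 hφ1 hθ1
end

section
/- Let f : ℝ^m × ℝ^n → ℝ^m and g : ℝ^m × ℝ^n → ℝ^n be twice continuously differentiable, let (φ*, θ*) satisfy f(φ*, θ*) = 0 and g(φ*, θ*) = 0, and let f̃ = f − (αh/2)(f·∇_φ f + g·∇_θ f), g̃ = g − (λh/2)(f·∇_φ g + g·∇_θ g) be the modified vector fields of simultaneous gradient descent. Then the Jacobian of (f̃, g̃) at (φ*, θ*) equals J − (h/2)·K, where J is the Jacobian of (f, g) at (φ*, θ*) and K is the block matrix with blocks K₁₁ = α((∇_φ f)² + ∇_φ g·∇_θ f), K₁₂ = α(∇_θ f·∇_φ f + ∇_θ g·∇_θ f), K₂₁ = λ(∇_φ g·∇_θ g + ∇_φ f·∇_φ g), K₂₂ = λ((∇_θ g)² + ∇_θ f·∇_φ g), all blocks evaluated at (φ*, θ*). -/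
/-! At a zero `zs` of `F = (f, g)`, the product rule for `z ↦ Df(z) (F z)` loses its
second-derivative term, which is applied to `F zs = 0`. The correction terms of the modified
field therefore differentiate to `Df ∘ DF` and `Dg ∘ DF`, whose blocks are the products of
partial derivatives that make up `K`. -/

noncomputable section

/-- Partial (Fréchet) derivative with respect to the first player's parameters `φ`. -/
def dPhi {m n : ℕ} {W : Type*} [NormedAddCommGroup W] [NormedSpace ℝ W]
    (f : EuclideanSpace ℝ (Fin m) × EuclideanSpace ℝ (Fin n) → W)
    (z : EuclideanSpace ℝ (Fin m) × EuclideanSpace ℝ (Fin n)) :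
    EuclideanSpace ℝ (Fin m) →L[ℝ] W :=
  (fderiv ℝ f z).comp (ContinuousLinearMap.inl ℝ (EuclideanSpace ℝ (Fin m)) (EuclideanSpace ℝ (Fin n)))

/-- Partial (Fréchet) derivative with respect to the second player's parameters `θ`. -/
def dTheta {m n : ℕ} {W : Type*} [NormedAddCommGroup W] [NormedSpace ℝ W]
    (f : EuclideanSpace ℝ (Fin m) × EuclideanSpace ℝ (Fin n) → W)
    (z : EuclideanSpace ℝ (Fin m) × EuclideanSpace ℝ (Fin n)) :
    EuclideanSpace ℝ (Fin n) →L[ℝ] W :=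
  (fderiv ℝ f z).comp (ContinuousLinearMap.inr ℝ (EuclideanSpace ℝ (Fin m)) (EuclideanSpace ℝ (Fin n)))

section

variable {𝕜 E F G : Type*} [NontriviallyNormedField 𝕜] [NormedAddCommGroup E] [NormedSpace 𝕜 E]
  [NormedAddCommGroup F] [NormedSpace 𝕜 F] [NormedAddCommGroup G] [NormedSpace 𝕜 G]

theorem hasFDerivAt_clm_apply_of_eq_zero {A : E → F →L[𝕜] G} {v : E → F} {v' : E →L[𝕜] F}
    {z : E} (hA : DifferentiableAt 𝕜 A z) (hv : HasFDerivAt v v' z) (hvz : v z = 0) :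
    HasFDerivAt (fun x => A x (v x)) (A z ∘L v') z := by
  simpa [hvz] using hA.hasFDerivAt.clm_apply hv

theorem hasFDerivAt_sub_smul_fderiv_apply_of_eq_zero {u : E → G} {v : E → E}
    {v' : E →L[𝕜] E} {z : E} (hu : DifferentiableAt 𝕜 u z)
    (hdu : DifferentiableAt 𝕜 (fderiv 𝕜 u) z) (hv : HasFDerivAt v v' z) (hvz : v z = 0) (c : 𝕜) :
    HasFDerivAt (fun x => u x - c • fderiv 𝕜 u x (v x))
      (fderiv 𝕜 u z - c • (fderiv 𝕜 u z ∘L v')) z :=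
  hu.hasFDerivAt.sub ((hasFDerivAt_clm_apply_of_eq_zero hdu hv hvz).const_smul c)

theorem ContinuousLinearMap.comp_prod_eq_coprod (D : E × F →L[𝕜] G) (A : E × F →L[𝕜] E)
    (B : E × F →L[𝕜] F) :
    D ∘L A.prod B =
      (D ∘L inl 𝕜 E F ∘L A ∘L inl 𝕜 E F + D ∘L inr 𝕜 E F ∘L B ∘L inl 𝕜 E F).coprod
        (D ∘L inl 𝕜 E F ∘L A ∘L inr 𝕜 E F + D ∘L inr 𝕜 E F ∘L B ∘L inr 𝕜 E F) := by
  ext x <;> simp [← map_add]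

end

theorem fderiv_comp_prod_eq_coprod_dPhi_dTheta {m n : ℕ} {W : Type*} [NormedAddCommGroup W]
    [NormedSpace ℝ W] (u : EuclideanSpace ℝ (Fin m) × EuclideanSpace ℝ (Fin n) → W)
    (f : EuclideanSpace ℝ (Fin m) × EuclideanSpace ℝ (Fin n) → EuclideanSpace ℝ (Fin m))
    (g : EuclideanSpace ℝ (Fin m) × EuclideanSpace ℝ (Fin n) → EuclideanSpace ℝ (Fin n))
    (z : EuclideanSpace ℝ (Fin m) × EuclideanSpace ℝ (Fin n)) :
    fderiv ℝ u z ∘L (fderiv ℝ f z).prod (fderiv ℝ g z) =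
      (dPhi u z ∘L dPhi f z + dTheta u z ∘L dPhi g z).coprod
        (dPhi u z ∘L dTheta f z + dTheta u z ∘L dTheta g z) :=
  ContinuousLinearMap.comp_prod_eq_coprod _ _ _

theorem modified_jacobian_simultaneous_general {m n : ℕ}
    (f : EuclideanSpace ℝ (Fin m) × EuclideanSpace ℝ (Fin n) → EuclideanSpace ℝ (Fin m))
    (g : EuclideanSpace ℝ (Fin m) × EuclideanSpace ℝ (Fin n) → EuclideanSpace ℝ (Fin n))
    (hf : ContDiff ℝ 2 f) (hg : ContDiff ℝ 2 g)
    (zs : EuclideanSpace ℝ (Fin m) × EuclideanSpace ℝ (Fin n))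
    (hfz : f zs = 0) (hgz : g zs = 0)
    (α lam h : ℝ)
    (Ftilde : EuclideanSpace ℝ (Fin m) × EuclideanSpace ℝ (Fin n) →
      EuclideanSpace ℝ (Fin m) × EuclideanSpace ℝ (Fin n))
    (hFtilde : Ftilde = fun z =>
      (f z - (α * h / 2) • fderiv ℝ f z (f z, g z),
       g z - (lam * h / 2) • fderiv ℝ g z (f z, g z))) :
    fderiv ℝ Ftilde zs =
      fderiv ℝ (fun z => (f z, g z)) zs -
        (h / 2) •
          (ContinuousLinearMap.prod
            ((α • (dPhi f zs ∘L dPhi f zs + dTheta f zs ∘L dPhi g zs)).coprod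
              (α • (dPhi f zs ∘L dTheta f zs + dTheta f zs ∘L dTheta g zs)))
            ((lam • (dTheta g zs ∘L dPhi g zs + dPhi g zs ∘L dPhi f zs)).coprod
              (lam • (dTheta g zs ∘L dTheta g zs + dPhi g zs ∘L dTheta f zs)))) := by
  have hf1 : Differentiable ℝ f := hf.differentiable (by norm_num)
  have hg1 : Differentiable ℝ g := hg.differentiable (by norm_num)
  have hdf : Differentiable ℝ (fderiv ℝ f) :=
    (hf.fderiv_right (m := 1) (by norm_num)).differentiable (by norm_num)
  have hdg : Differentiable ℝ (fderiv ℝ g) :=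
    (hg.fderiv_right (m := 1) (by norm_num)).differentiable (by norm_num)
  have hJ : HasFDerivAt (fun z => (f z, g z)) ((fderiv ℝ f zs).prod (fderiv ℝ g zs)) zs :=
    (hf1 zs).hasFDerivAt.prodMk (hg1 zs).hasFDerivAt
  have hFz : (f zs, g zs) = 0 := by simp [hfz, hgz]
  have hFt := (hasFDerivAt_sub_smul_fderiv_apply_of_eq_zero (hf1 zs) (hdf zs) hJ hFz
    (α * h / 2)).prodMk (hasFDerivAt_sub_smul_fderiv_apply_of_eq_zero (hg1 zs) (hdg zs) hJ hFz
    (lam * h / 2))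
  rw [hFtilde, hFt.fderiv, hJ.fderiv, fderiv_comp_prod_eq_coprod_dPhi_dTheta,
    fderiv_comp_prod_eq_coprod_dPhi_dTheta]
  refine ContinuousLinearMap.prod_ext ?_ ?_ <;> refine ContinuousLinearMap.ext fun v => ?_ <;>
    refine Prod.ext ?_ ?_ <;>
    simp only [ContinuousLinearMap.coprod_add, ContinuousLinearMap.sub_comp,
      ContinuousLinearMap.smul_comp, ContinuousLinearMap.comp_apply, ContinuousLinearMap.inl_apply,
      ContinuousLinearMap.inr_apply, ContinuousLinearMap.prod_apply, ContinuousLinearMap.coprod_apply,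
      sub_apply, add_apply, smul_apply, map_zero, add_zero, zero_add, smul_add,
      Prod.smul_mk, Prod.mk_sub_mk] <;>
    module

/-- **Modified Jacobian at an equilibrium (simultaneous gradient descent).**
At an equilibrium `f = 0 = g`, the Jacobian of the modified vector field of simultaneous
gradient descent equals `J − (h/2)·K` with the blocks of `K` as in the paper. -/
theorem modified_jacobian_simultaneous {m n : ℕ}
    (f : EuclideanSpace ℝ (Fin m) × EuclideanSpace ℝ (Fin n) → EuclideanSpace ℝ (Fin m))
    (g : EuclideanSpace ℝ (Fin m) × EuclideanSpace ℝ (Fin n) → EuclideanSpace ℝ (Fin n))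
    (hf : ContDiff ℝ 2 f) (hg : ContDiff ℝ 2 g)
    (zs : EuclideanSpace ℝ (Fin m) × EuclideanSpace ℝ (Fin n))
    (hfz : f zs = 0) (hgz : g zs = 0)
    (α lam h : ℝ) (hα : 0 < α) (hlam : 0 < lam) (hh : 0 < h)
    (Ftilde : EuclideanSpace ℝ (Fin m) × EuclideanSpace ℝ (Fin n) →
      EuclideanSpace ℝ (Fin m) × EuclideanSpace ℝ (Fin n))
    (hFtilde : Ftilde = fun z =>
      (f z - (α * h / 2) • fderiv ℝ f z (f z, g z),
       g z - (lam * h / 2) • fderiv ℝ g z (f z, g z))) :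
    fderiv ℝ Ftilde zs =
      fderiv ℝ (fun z => (f z, g z)) zs -
        (h / 2) •
          (ContinuousLinearMap.prod
            ((α • (dPhi f zs ∘L dPhi f zs + dTheta f zs ∘L dPhi g zs)).coprod
              (α • (dPhi f zs ∘L dTheta f zs + dTheta f zs ∘L dTheta g zs)))
            ((lam • (dTheta g zs ∘L dPhi g zs + dPhi g zs ∘L dPhi f zs)).coprod
              (lam • (dTheta g zs ∘L dTheta g zs + dPhi g zs ∘L dTheta f zs)))) :=
  modified_jacobian_simultaneous_general f g hf hg zs hfz hgz α lam h Ftilde hFtilde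
end
end

section
/- Under the hypotheses of the previous statement (f(φ*, θ*) = 0 = g(φ*, θ*), f, g twice continuously differentiable), the trace of the modified Jacobian J̃ of simultaneous gradient descent at the equilibrium satisfies Tr(J̃) = Tr(J) − (h/2)(α·Tr((∇_φ f)²) + λ·Tr((∇_θ g)²)) − (h/2)(α + λ)·Tr(∇_φ g · ∇_θ f), where J is the Jacobian of (f, g) at (φ*, θ*) and all Jacobian blocks are evaluated at (φ*, θ*). -/
/-!
At an equilibrium `z*` the second-derivative part of the product rule for
`z ↦ Df(z) (f z, g z)` is applied to `(f, g)(z*) = 0` and drops out, so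
`J̃ = J - (h/2) diag(α, λ) J²`. The trace of `diag(α, λ) J²` is read off its two diagonal
blocks, whose cross terms `Tr(∇_θf ∇_φg)` and `Tr(∇_φg ∇_θf)` agree by cyclicity.
-/

noncomputable section

namespace LinearMap

variable {R M N P : Type*} [CommRing R] [AddCommGroup M] [Module R M] [AddCommGroup N] [Module R N]
  [AddCommGroup P] [Module R P]

theorem comp_prod_eq_add (A : M × N →ₗ[R] P) (X : P →ₗ[R] M) (Y : P →ₗ[R] N) :
    A ∘ₗ X.prod Y = (A ∘ₗ inl R M N) ∘ₗ X + (A ∘ₗ inr R M N) ∘ₗ Y := by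
  simpa only [coprod_comp_inl_inr] using coprod_comp_prod (A ∘ₗ inl R M N) (A ∘ₗ inr R M N) X Y

variable [Module.Free R M] [Module.Finite R M] [Module.Free R N] [Module.Finite R N]

theorem trace_prod (A : M × N →ₗ[R] M) (B : M × N →ₗ[R] N) :
    trace R (M × N) (A.prod B) = trace R M (A ∘ₗ inl R M N) + trace R N (B ∘ₗ inr R M N) := by
  have hsplit : A.prod B = inl R M N ∘ₗ A + inr R M N ∘ₗ B := by
    ext x <;> simp
  rw [hsplit, map_add, trace_comp_comm' A, trace_comp_comm' B]

/-- With `J = A.prod B` written in blocks `[[Aφ, Aθ], [Bφ, Bθ]]`, this is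
`Tr (J - diag(a, b) J²) = Tr J - a Tr Aφ² - b Tr Bθ² - (a + b) Tr (Aθ Bφ)`. -/
theorem trace_prod_sub_smul_comp_prod (A : M × N →ₗ[R] M) (B : M × N →ₗ[R] N) (a b : R) :
    trace R (M × N) ((A - a • A ∘ₗ A.prod B).prod (B - b • B ∘ₗ A.prod B)) =
      trace R (M × N) (A.prod B) -
        (a * trace R M ((A ∘ₗ inl R M N) ∘ₗ (A ∘ₗ inl R M N)) +
          b * trace R N ((B ∘ₗ inr R M N) ∘ₗ (B ∘ₗ inr R M N))) -
        (a + b) * trace R M ((A ∘ₗ inr R M N) ∘ₗ (B ∘ₗ inl R M N)) := by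
  have hcross : trace R N (B ∘ₗ inl R M N ∘ₗ A ∘ₗ inr R M N) =
      trace R M (A ∘ₗ inr R M N ∘ₗ B ∘ₗ inl R M N) := by
    simpa only [comp_assoc] using trace_comp_comm' (A ∘ₗ inr R M N) (B ∘ₗ inl R M N)
  simp only [trace_prod, sub_comp, smul_comp, comp_assoc, prod_comp, comp_prod_eq_add, map_sub,
    map_smul, map_add, smul_eq_mul, hcross]
  ring

end LinearMap

section ModifiedField

variable {𝕜 E F G : Type*} [NontriviallyNormedField 𝕜] [NormedAddCommGroup E] [NormedSpace 𝕜 E]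
  [NormedAddCommGroup F] [NormedSpace 𝕜 F] [NormedAddCommGroup G] [NormedSpace 𝕜 G]

theorem HasFDerivAt.clm_apply_of_eq_zero {c : E → F →L[𝕜] G} {c' : E →L[𝕜] F →L[𝕜] G}
    {u : E → F} {u' : E →L[𝕜] F} {x : E} (hc : HasFDerivAt c c' x) (hu : HasFDerivAt u u' x)
    (hux : u x = 0) : HasFDerivAt (fun y => c y (u y)) (c x ∘L u') x := by
  simpa [hux] using hc.clm_apply hu

theorem hasFDerivAt_sub_smul_fderiv_apply {f : E → F} {u : E → E} {u' : E →L[𝕜] E} {x : E}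
    (hf : ContDiff 𝕜 2 f) (hu : HasFDerivAt u u' x) (hux : u x = 0) (a : 𝕜) :
    HasFDerivAt (fun y => f y - a • fderiv 𝕜 f y (u y))
      (fderiv 𝕜 f x - a • (fderiv 𝕜 f x ∘L u')) x := by
  have hf' : Differentiable 𝕜 (fderiv 𝕜 f) :=
    (hf.fderiv_right (m := 1) le_rfl).differentiable one_ne_zero
  exact (hf.differentiable two_ne_zero x).hasFDerivAt.sub
    (((hf' x).hasFDerivAt.clm_apply_of_eq_zero hu hux).const_smul a)

end ModifiedField

theorem modified_jacobian_trace_simultaneous_general {m n : ℕ}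
    (f : EuclideanSpace ℝ (Fin m) × EuclideanSpace ℝ (Fin n) → EuclideanSpace ℝ (Fin m))
    (g : EuclideanSpace ℝ (Fin m) × EuclideanSpace ℝ (Fin n) → EuclideanSpace ℝ (Fin n))
    (hf : ContDiff ℝ 2 f) (hg : ContDiff ℝ 2 g)
    (zs : EuclideanSpace ℝ (Fin m) × EuclideanSpace ℝ (Fin n))
    (hfz : f zs = 0) (hgz : g zs = 0)
    (α lam h : ℝ)
    (Ftilde : EuclideanSpace ℝ (Fin m) × EuclideanSpace ℝ (Fin n) →
      EuclideanSpace ℝ (Fin m) × EuclideanSpace ℝ (Fin n))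
    (hFtilde : Ftilde = fun z =>
      (f z - (α * h / 2) • fderiv ℝ f z (f z, g z),
       g z - (lam * h / 2) • fderiv ℝ g z (f z, g z))) :
    LinearMap.trace ℝ (EuclideanSpace ℝ (Fin m) × EuclideanSpace ℝ (Fin n))
        (fderiv ℝ Ftilde zs : _ →ₗ[ℝ] _) =
      LinearMap.trace ℝ (EuclideanSpace ℝ (Fin m) × EuclideanSpace ℝ (Fin n))
          (fderiv ℝ (fun z => (f z, g z)) zs : _ →ₗ[ℝ] _) -
        (h / 2) *
          (α * LinearMap.trace ℝ (EuclideanSpace ℝ (Fin m)) (dPhi f zs ∘L dPhi f zs : _ →ₗ[ℝ] _) +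
            lam * LinearMap.trace ℝ (EuclideanSpace ℝ (Fin n)) (dTheta g zs ∘L dTheta g zs : _ →ₗ[ℝ] _)) -
        (h / 2) * (α + lam) *
          LinearMap.trace ℝ (EuclideanSpace ℝ (Fin m)) (dTheta f zs ∘L dPhi g zs : _ →ₗ[ℝ] _) := by
  set J := (fderiv ℝ f zs).prod (fderiv ℝ g zs)
  have hJ : HasFDerivAt (fun z => (f z, g z)) J zs :=
    (hf.differentiable two_ne_zero zs).hasFDerivAt.prodMk
      (hg.differentiable two_ne_zero zs).hasFDerivAt
  have hzero : (f zs, g zs) = 0 := by simp [hfz, hgz]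
  have hJtilde : HasFDerivAt Ftilde
      ((fderiv ℝ f zs - (α * h / 2) • (fderiv ℝ f zs ∘L J)).prod
        (fderiv ℝ g zs - (lam * h / 2) • (fderiv ℝ g zs ∘L J))) zs :=
    hFtilde ▸ (hasFDerivAt_sub_smul_fderiv_apply hf hJ hzero _).prodMk
      (hasFDerivAt_sub_smul_fderiv_apply hg hJ hzero _)
  rw [hJtilde.fderiv, hJ.fderiv]
  simp only [J, dPhi, dTheta, ContinuousLinearMap.coe_prod, ContinuousLinearMap.toLinearMap_sub,
    ContinuousLinearMap.toLinearMap_smul, ContinuousLinearMap.toLinearMap_comp,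
    ContinuousLinearMap.coe_inl, ContinuousLinearMap.coe_inr]
  rw [LinearMap.trace_prod_sub_smul_comp_prod]
  ring

/-- **Trace of the modified Jacobian (simultaneous gradient descent).**
`Tr(J̃) = Tr(J) − (h/2)(α Tr((∇_φ f)²) + λ Tr((∇_θ g)²)) − (h/2)(α + λ) Tr(∇_φ g · ∇_θ f)`. -/
theorem modified_jacobian_trace_simultaneous {m n : ℕ}
    (f : EuclideanSpace ℝ (Fin m) × EuclideanSpace ℝ (Fin n) → EuclideanSpace ℝ (Fin m))
    (g : EuclideanSpace ℝ (Fin m) × EuclideanSpace ℝ (Fin n) → EuclideanSpace ℝ (Fin n))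
    (hf : ContDiff ℝ 2 f) (hg : ContDiff ℝ 2 g)
    (zs : EuclideanSpace ℝ (Fin m) × EuclideanSpace ℝ (Fin n))
    (hfz : f zs = 0) (hgz : g zs = 0)
    (α lam h : ℝ) (hα : 0 < α) (hlam : 0 < lam) (hh : 0 < h)
    (Ftilde : EuclideanSpace ℝ (Fin m) × EuclideanSpace ℝ (Fin n) →
      EuclideanSpace ℝ (Fin m) × EuclideanSpace ℝ (Fin n))
    (hFtilde : Ftilde = fun z =>
      (f z - (α * h / 2) • fderiv ℝ f z (f z, g z),
       g z - (lam * h / 2) • fderiv ℝ g z (f z, g z))) :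
    LinearMap.trace ℝ (EuclideanSpace ℝ (Fin m) × EuclideanSpace ℝ (Fin n))
        (fderiv ℝ Ftilde zs : _ →ₗ[ℝ] _) =
      LinearMap.trace ℝ (EuclideanSpace ℝ (Fin m) × EuclideanSpace ℝ (Fin n))
          (fderiv ℝ (fun z => (f z, g z)) zs : _ →ₗ[ℝ] _) -
        (h / 2) *
          (α * LinearMap.trace ℝ (EuclideanSpace ℝ (Fin m)) (dPhi f zs ∘L dPhi f zs : _ →ₗ[ℝ] _) +
            lam * LinearMap.trace ℝ (EuclideanSpace ℝ (Fin n)) (dTheta g zs ∘L dTheta g zs : _ →ₗ[ℝ] _)) -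
        (h / 2) * (α + lam) *
          LinearMap.trace ℝ (EuclideanSpace ℝ (Fin m)) (dTheta f zs ∘L dPhi g zs : _ →ₗ[ℝ] _) :=
  modified_jacobian_trace_simultaneous_general f g hf hg zs hfz hgz α lam h Ftilde hFtilde
end
end

section
/- Let l : ℝ → ℝ be twice continuously differentiable with l'(x) ≠ 0 for all x ∈ ℝ, and let h > 0. Consider the modified Dirac-GAN system given by discretization drift under simultaneous gradient descent with equal learning rates h: dφ/dt = l'(θφ)θ + (h/2)(−θ³ l'(θφ)l''(θφ) + φ l'(θφ)² + φ²θ l'(θφ)l''(θφ)), dθ/dt = −l'(θφ)φ − (h/2)(−θ l'(θφ)² − θ²φ l'(θφ)l''(θφ) + φ³ l'(θφ)l''(θφ)). Along any solution, d(θ² + φ²)/dt = h·l'(θφ)²·(θ² + φ²); in particular θ² + φ² is strictly increasing at every point (θ, φ) ≠ (0, 0). -/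
/-!
Only the `l'²`-terms of the modified field have a radial component: the unmodified
Dirac-GAN field `(θ', φ') = l'·(-φ, θ)` is a rotation, and the `l'l''`-terms of the drift are
tangent to the circles `θ² + φ² = const` as well. Hence `d(θ² + φ²)/dt = 2(θθ' + φφ') = h l'² (θ² + φ²)`.
-/

namespace DiracGAN

/- The modified vector field at `(θ, φ)`, with `a = l'(θφ)` and `b = l''(θφ)` abstracted so that
its components are polynomials. -/
noncomputable def modifiedFieldφ (h a b θ φ : ℝ) : ℝ :=
  a * θ + (h / 2) * (-θ ^ 3 * a * b + φ * a ^ 2 + φ ^ 2 * θ * a * b)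

noncomputable def modifiedFieldθ (h a b θ φ : ℝ) : ℝ :=
  -(a * φ) - (h / 2) * (-θ * a ^ 2 - θ ^ 2 * φ * a * b + φ ^ 3 * a * b)

theorem radial_modifiedField (h a b θ φ : ℝ) :
    θ * modifiedFieldθ h a b θ φ + φ * modifiedFieldφ h a b θ φ =
      h / 2 * a ^ 2 * (θ ^ 2 + φ ^ 2) := by
  unfold modifiedFieldθ modifiedFieldφ
  ring

end DiracGAN

theorem HasDerivAt.sq_add_sq {f g : ℝ → ℝ} {f' g' t : ℝ} (hf : HasDerivAt f f' t)
    (hg : HasDerivAt g g' t) :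
    HasDerivAt (fun s => f s ^ 2 + g s ^ 2) (2 * (f t * f' + g t * g')) t :=
  ((hf.fun_pow 2).fun_add (hg.fun_pow 2)).congr_deriv (by ring)

theorem sq_add_sq_pos_of_ne_zero {R : Type*} [Ring R] [LinearOrder R] [IsStrictOrderedRing R]
    {a b : R} (h : (a, b) ≠ (0, 0)) : 0 < a ^ 2 + b ^ 2 := by
  rw [Ne, Prod.mk.injEq, not_and_or] at h
  rcases h with ha | hb
  · exact add_pos_of_pos_of_nonneg (sq_pos_iff.mpr ha) (sq_nonneg b)
  · exact add_pos_of_nonneg_of_pos (sq_nonneg a) (sq_pos_iff.mpr hb)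

open DiracGAN in
theorem diracGAN_modified_dynamics_increase_norm_general
    (l : ℝ → ℝ)
    (hl' : ∀ x : ℝ, deriv l x ≠ 0)
    (h : ℝ) (hh : 0 < h)
    (φ θ : ℝ → ℝ)
    (hφ : ∀ t : ℝ, HasDerivAt φ
      (deriv l (θ t * φ t) * θ t +
        (h / 2) *
          (-(θ t) ^ 3 * deriv l (θ t * φ t) * deriv (deriv l) (θ t * φ t) +
            φ t * (deriv l (θ t * φ t)) ^ 2 +
            (φ t) ^ 2 * θ t * deriv l (θ t * φ t) * deriv (deriv l) (θ t * φ t))) t)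
    (hθ : ∀ t : ℝ, HasDerivAt θ
      (-(deriv l (θ t * φ t) * φ t) -
        (h / 2) *
          (-(θ t) * (deriv l (θ t * φ t)) ^ 2 -
            (θ t) ^ 2 * φ t * deriv l (θ t * φ t) * deriv (deriv l) (θ t * φ t) +
            (φ t) ^ 3 * deriv l (θ t * φ t) * deriv (deriv l) (θ t * φ t))) t) :
    ∀ t : ℝ,
      HasDerivAt (fun s => θ s ^ 2 + φ s ^ 2)
        (h * (deriv l (θ t * φ t)) ^ 2 * (θ t ^ 2 + φ t ^ 2)) t ∧
      ((θ t, φ t) ≠ (0, 0) →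
        0 < h * (deriv l (θ t * φ t)) ^ 2 * (θ t ^ 2 + φ t ^ 2)) := by
  intro t
  set a := deriv l (θ t * φ t)
  set b := deriv (deriv l) (θ t * φ t)
  refine ⟨?_, fun hne => ?_⟩
  · have hθ' : HasDerivAt θ (modifiedFieldθ h a b (θ t) (φ t)) t := hθ t
    have hφ' : HasDerivAt φ (modifiedFieldφ h a b (θ t) (φ t)) t := hφ t
    exact (hθ'.sq_add_sq hφ').congr_deriv (by rw [radial_modifiedField]; ring)
  · have ha : a ≠ 0 := hl' _
    have hnorm := sq_add_sq_pos_of_ne_zero hne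
    positivity

/-- **Dirac-GAN: the modified continuous dynamics of simultaneous gradient descent increase
`θ² + φ²`.** Along any solution of the modified system,
`d(θ² + φ²)/dt = h·l'(θφ)²·(θ² + φ²)`, which is strictly positive away from `(0, 0)`. -/
theorem diracGAN_modified_dynamics_increase_norm
    (l : ℝ → ℝ) (hl : ContDiff ℝ 2 l)
    (hl' : ∀ x : ℝ, deriv l x ≠ 0)
    (h : ℝ) (hh : 0 < h)
    (φ θ : ℝ → ℝ)
    (hφ : ∀ t : ℝ, HasDerivAt φ
      (deriv l (θ t * φ t) * θ t +
        (h / 2) *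
          (-(θ t) ^ 3 * deriv l (θ t * φ t) * deriv (deriv l) (θ t * φ t) +
            φ t * (deriv l (θ t * φ t)) ^ 2 +
            (φ t) ^ 2 * θ t * deriv l (θ t * φ t) * deriv (deriv l) (θ t * φ t))) t)
    (hθ : ∀ t : ℝ, HasDerivAt θ
      (-(deriv l (θ t * φ t) * φ t) -
        (h / 2) *
          (-(θ t) * (deriv l (θ t * φ t)) ^ 2 -
            (θ t) ^ 2 * φ t * deriv l (θ t * φ t) * deriv (deriv l) (θ t * φ t) +
            (φ t) ^ 3 * deriv l (θ t * φ t) * deriv (deriv l) (θ t * φ t))) t) :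
    ∀ t : ℝ,
      HasDerivAt (fun s => θ s ^ 2 + φ s ^ 2)
        (h * (deriv l (θ t * φ t)) ^ 2 * (θ t ^ 2 + φ t ^ 2)) t ∧
      ((θ t, φ t) ≠ (0, 0) →
        0 < h * (deriv l (θ t * φ t)) ^ 2 * (θ t ^ 2 + φ t ^ 2)) :=
  diracGAN_modified_dynamics_increase_norm_general l hl' h hh φ θ hφ hθ
end

section
/- Let l : ℝ → ℝ be twice continuously differentiable with l'(0) ≠ 0, and let h, α, λ > 0. The Jacobian at the equilibrium (θ, φ) = (0, 0) of the modified Dirac-GAN system for simultaneous gradient descent with learning rates αh and λh equals the 2×2 matrix [[hα l'(0)²/2, l'(0)], [−l'(0), hλ l'(0)²/2]]; its trace equals (h/2)(α + λ)l'(0)² > 0, and consequently this matrix has an eigenvalue with strictly positive real part, so the equilibrium of the modified system is unstable. -/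
/-!
At the equilibrium the Dirac-GAN vector field `F = (f, g)` vanishes, so the correction term
`z ↦ Df(z) (F z)` of the modified field has derivative `Df(0) ∘ DF(0)` there: only continuity
of `Df` is needed, not a second derivative. Hence the modified Jacobian is
`J - (h/2) diag(α, λ) J²` with `J = [[0, l'(0)], [-l'(0), 0]]` and `J² = -l'(0)² I`. Its trace
is positive, and as the trace is the sum of the complex eigenvalues, one of them has positive
real part.
-/

open Asymptotics Filter Topology ContinuousLinearMap

theorem HasFDerivAt.clm_apply_of_eq_zero_s16 {𝕜 E F G : Type*} [NontriviallyNormedField 𝕜]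
    [NormedAddCommGroup E] [NormedSpace 𝕜 E] [NormedAddCommGroup F] [NormedSpace 𝕜 F]
    [NormedAddCommGroup G] [NormedSpace 𝕜 G] {A : E → F →L[𝕜] G} {u : E → F}
    {u' : E →L[𝕜] F} {x : E} (hu : HasFDerivAt u u' x) (hA : ContinuousAt A x) (hux : u x = 0) :
    HasFDerivAt (fun z => A z (u z)) ((A x).comp u') x := by
  refine .of_isLittleO ?_
  have hvar : (fun z => (A z - A x) (u z)) =o[𝓝 x] (· - x) := by
    have hAo : (fun z => A z - A x) =o[𝓝 x] (fun _ => (1 : ℝ)) :=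
      (isLittleO_one_iff ℝ).2 (tendsto_sub_nhds_zero_iff.2 hA)
    have huO : u =O[𝓝 x] (· - x) := by simpa [hux] using hu.isBigO_sub
    have hprod := hAo.norm_norm.mul_isBigO huO.norm_norm
    simp only [norm_one, one_mul] at hprod
    exact (IsBigO.of_norm_le fun z => (A z - A x).le_opNorm (u z)).trans_isLittleO
      hprod.of_norm_right
  have hfix : (fun z => A x (u z - u x - u' (z - x))) =o[𝓝 x] (· - x) :=
    ((A x).isBigO_comp _ _).trans_isLittleO hu.isLittleO
  refine (hvar.add hfix).congr_left fun z => ?_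
  simp [hux]

theorem HasFDerivAt.mul_clm_of_eq_zero {E : Type*} [NormedAddCommGroup E] [NormedSpace ℝ E]
    {r : E → ℝ} {r' p : E →L[ℝ] ℝ} {x : E} (hr : HasFDerivAt r r' x) (hpx : p x = 0) :
    HasFDerivAt (fun z => r z * p z) (r x • p) x := by
  simpa [hpx] using hr.fun_mul p.hasFDerivAt

theorem Matrix.exists_hasEigenvalue_re_pos_of_re_trace_pos {n : Type*} [Fintype n]
    [DecidableEq n] (A : Matrix n n ℂ) (hA : 0 < A.trace.re) :
    ∃ μ : ℂ, Module.End.HasEigenvalue (toLin' A) μ ∧ 0 < μ.re := by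
  by_contra! hμ
  have hroots : ∀ x ∈ A.charpoly.roots.map Complex.re, x ≤ 0 := by
    simp only [Multiset.mem_map, forall_exists_index, and_imp, forall_apply_eq_imp_iff₂]
    refine fun μ hmem => hμ μ <| (Module.End.hasEigenvalue_iff_isRoot_charpoly _ _).2 ?_
    rw [Matrix.charpoly_toLin']
    exact (Polynomial.mem_roots'.1 hmem).2
  rw [trace_eq_sum_roots_charpoly, ← Complex.coe_reAddGroupHom, map_multiset_sum] at hA
  exact hA.not_ge <| by simpa using Multiset.sum_le_card_nsmul _ 0 hroots

theorem Matrix.exists_hasEigenvalue_map_ofReal_re_pos_of_trace_pos {n : Type*} [Fintype n]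
    [DecidableEq n] (A : Matrix n n ℝ) (hA : 0 < A.trace) :
    ∃ μ : ℂ, Module.End.HasEigenvalue (toLin' (A.map (fun x : ℝ => (x : ℂ)))) μ ∧ 0 < μ.re := by
  refine exists_hasEigenvalue_re_pos_of_re_trace_pos _ ?_
  have htrace : (A.map (fun x : ℝ => (x : ℂ))).trace = A.trace :=
    (AddMonoidHom.map_trace Complex.ofRealHom.toAddMonoidHom A).symm
  rwa [htrace, Complex.ofReal_re]

/-- For `a = αh/2`, `b = λh/2` this is the gradient flow of the modified losses `L̃₁`, `L̃₂`. -/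
noncomputable def modifiedSimGDField (a b : ℝ) (f g : ℝ × ℝ → ℝ) (z : ℝ × ℝ) : ℝ × ℝ :=
  (f z - a * fderiv ℝ f z (f z, g z), g z - b * fderiv ℝ g z (f z, g z))

theorem hasFDerivAt_modifiedSimGDField {f g : ℝ × ℝ → ℝ} {f' g' : ℝ × ℝ →L[ℝ] ℝ} {x : ℝ × ℝ}
    (a b : ℝ) (hf : HasFDerivAt f f' x) (hg : HasFDerivAt g g' x)
    (hf' : ContinuousAt (fderiv ℝ f) x) (hg' : ContinuousAt (fderiv ℝ g) x)
    (hfx : f x = 0) (hgx : g x = 0) :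
    HasFDerivAt (modifiedSimGDField a b f g)
      ((f' - a • f'.comp (f'.prod g')).prod (g' - b • g'.comp (f'.prod g'))) x := by
  have hF : HasFDerivAt (fun z => (f z, g z)) (f'.prod g') x := hf.prodMk hg
  have hFx : (f x, g x) = 0 := by simp [hfx, hgx]
  have hcorr_f := (hF.clm_apply_of_eq_zero_s16 hf' hFx).const_mul a
  have hcorr_g := (hF.clm_apply_of_eq_zero_s16 hg' hFx).const_mul b
  rw [hf.fderiv] at hcorr_f
  rw [hg.fderiv] at hcorr_g
  exact (hf.sub hcorr_f).prodMk (hg.sub hcorr_g)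

/-- **Dirac-GAN: instability of the modified system of simultaneous gradient descent.**
The Jacobian at the equilibrium `(0, 0)` of the modified Dirac-GAN vector field equals the
matrix `[[hα l'(0)²/2, l'(0)], [−l'(0), hλ l'(0)²/2]]`; its trace equals
`(h/2)(α + λ) l'(0)² > 0`, and consequently it has an eigenvalue with strictly positive real
part, so the equilibrium of the modified system is unstable. -/
theorem diracGAN_modified_jacobian_unstable
    (l : ℝ → ℝ) (hl : ContDiff ℝ 2 l) (hl0 : deriv l 0 ≠ 0)
    (h α lam : ℝ) (hh : 0 < h) (hα : 0 < α) (hlam : 0 < lam)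
    -- Dirac-GAN vector field: first coordinate is φ, second is θ
    (f g : ℝ × ℝ → ℝ)
    (hfdef : f = fun z => deriv l (z.2 * z.1) * z.2)
    (hgdef : g = fun z => -(deriv l (z.2 * z.1) * z.1))
    -- the modified vector field of simultaneous gradient descent
    (Ftilde : ℝ × ℝ → ℝ × ℝ)
    (hFtilde : Ftilde = fun z =>
      (f z - (α * h / 2) * fderiv ℝ f z (f z, g z),
       g z - (lam * h / 2) * fderiv ℝ g z (f z, g z)))
    (M : Matrix (Fin 2) (Fin 2) ℝ)
    (hM : M = !![h * α * (deriv l 0) ^ 2 / 2, deriv l 0;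
                 -(deriv l 0), h * lam * (deriv l 0) ^ 2 / 2]) :
    -- the modified Jacobian at the equilibrium acts as the matrix `M`
    (∀ u v : ℝ, fderiv ℝ Ftilde (0, 0) (u, v) =
      (h * α * (deriv l 0) ^ 2 / 2 * u + deriv l 0 * v,
       -(deriv l 0) * u + h * lam * (deriv l 0) ^ 2 / 2 * v)) ∧
    Matrix.trace M = (h / 2) * (α + lam) * (deriv l 0) ^ 2 ∧
    0 < Matrix.trace M ∧
    ∃ μ : ℂ, Module.End.HasEigenvalue
        (Matrix.toLin' (M.map (fun x : ℝ => (x : ℂ)))) μ ∧ 0 < μ.re := by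
  have hr : ContDiff ℝ 1 fun z : ℝ × ℝ => deriv l (z.2 * z.1) :=
    hl.deriv'.comp (contDiff_snd.mul contDiff_fst)
  have hr0 := (hr.differentiable one_ne_zero (0, 0)).hasFDerivAt
  have hf : ContDiff ℝ 1 f := hfdef ▸ hr.mul contDiff_snd
  have hg : ContDiff ℝ 1 g := hgdef ▸ (hr.mul contDiff_fst).neg
  have hf0 : HasFDerivAt f (deriv l 0 • snd ℝ ℝ ℝ) (0, 0) := by
    simpa [hfdef] using hr0.mul_clm_of_eq_zero (p := snd ℝ ℝ ℝ) rfl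
  have hg0 : HasFDerivAt g (-(deriv l 0 • fst ℝ ℝ ℝ)) (0, 0) := by
    simpa [hgdef] using (hr0.mul_clm_of_eq_zero (p := fst ℝ ℝ ℝ) rfl).fun_neg
  have hJ := hasFDerivAt_modifiedSimGDField (α * h / 2) (lam * h / 2) hf0 hg0
    (hf.continuous_fderiv one_ne_zero).continuousAt (hg.continuous_fderiv one_ne_zero).continuousAt
    (by simp [hfdef]) (by simp [hgdef])
  have htrace : M.trace = (h / 2) * (α + lam) * (deriv l 0) ^ 2 := by
    rw [hM, Matrix.trace_fin_two_of]
    ring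
  have htrace_pos : 0 < M.trace := by
    rw [htrace]
    positivity
  refine ⟨fun u v => ?_, htrace, htrace_pos, ?_⟩
  · rw [show Ftilde = modifiedSimGDField (α * h / 2) (lam * h / 2) f g from hFtilde, hJ.fderiv]
    simp only [smul_comp, snd_comp_prod, smul_neg, sub_neg_eq_add, neg_comp, fst_comp_prod,
      prod_apply, add_apply, smul_apply, coe_snd', smul_eq_mul, coe_fst', neg_apply, neg_mul,
      Prod.mk.injEq, add_right_inj]
    constructor <;> ring
  · exact M.exists_hasEigenvalue_map_ofReal_re_pos_of_trace_pos htrace_pos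
end
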